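/- arXiv:1112.6363 — 5 statements merged into one kernel-verified Lean document; each statement's English description precedes it below -/
import Mathlib

section
/- Assume the GLM loss and condition (C) with constants M₁ > 0 and 0 < η* ≤ 1. Let φ₀(b) = M₂|b|₂ with M₂ > 0 and let φ be a seminorm on ℝ^p. Then F(ξ,S;φ₀,φ) ≥ F*(ξ,S;φ), where F*(ξ,S;φ) = inf{ n^{-1} Σ_{i=1}^n ψ̈₀(x^iβ*) · min( |x^i b| M₂/M₁, (x^i b)² ) / ((Σ_{j∈S}|b_j|) φ(b)) : b ∈ C(ξ,S), |b|₂ = 1 }. -/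
/-!
By the mean value theorem and condition (C), each summand
`(x^i b) (ψ̇₀(x^i β* + x^i b) - ψ̇₀(x^i β*))` of `Δ(β* + b, β*)` is at least
`e^{-M₁ |x^i b|} ψ̈₀(x^i β*) (x^i b)²` as long as `M₁ |x^i b| ≤ M₂ |b|₂ ≤ η*`. Beyond that range,
monotonicity of `ψ̇₀` lets one compare with the point at distance `M₂ |b|₂ / M₁`, which gives
`e^{-M₂ |b|₂} ψ̈₀(x^i β*) |x^i b| M₂ |b|₂ / M₁`. Both numerator and denominator of the quotient
are homogeneous of degree two under `b ↦ b / |b|₂`, so the quotient defining `F` at `b` dominates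
the one defining `F*` at `b / |b|₂`.
-/

open Real Finset

theorem ConvexOn.monotone_of_hasDerivAt {f f' : ℝ → ℝ} (hf : ConvexOn ℝ Set.univ f)
    (hd : ∀ x, HasDerivAt f (f' x) x) : Monotone f' := by
  intro x y hxy
  have h := hf.monotoneOn_deriv (fun x _ => (hd x).differentiableAt)
    (Set.mem_univ x) (Set.mem_univ y) hxy
  rwa [(hd x).deriv, (hd y).deriv] at h

theorem Monotone.sub_mul_sub_nonneg {f : ℝ → ℝ} (hf : Monotone f) (x y : ℝ) :
    0 ≤ (x - y) * (f x - f y) := by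
  rcases le_total x y with h | h
  · exact mul_nonneg_of_nonpos_of_nonpos (sub_nonpos.2 h) (sub_nonpos.2 (hf h))
  · exact mul_nonneg (sub_nonneg.2 h) (sub_nonneg.2 (hf h))

theorem exists_abs_le_sub_eq_mul_of_hasDerivAt {f f' : ℝ → ℝ} (hf : ∀ x, HasDerivAt f (f' x) x)
    (a t : ℝ) : ∃ s, |s| ≤ |t| ∧ f (a + t) - f a = t * f' (a + s) := by
  have hg : ∀ c, HasDerivAt (fun c => f (a + c * t)) (f' (a + c * t) * t) c := fun c =>
    (hf (a + c * t)).comp c ((hasDerivAt_mul_const t).const_add a)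
  obtain ⟨c, ⟨hc0, hc1⟩, hc⟩ := exists_hasDerivAt_eq_slope _ _ zero_lt_one
    (fun c _ => (hg c).continuousAt.continuousWithinAt) (fun c _ => hg c)
  refine ⟨c * t, ?_, ?_⟩
  · rw [abs_mul, abs_of_pos hc0]
    exact mul_le_of_le_one_left (abs_nonneg t) hc1.le
  · simp only [one_mul, zero_mul, add_zero, sub_zero, div_one] at hc
    rw [← hc, mul_comm]

theorem le_mul_exp_of_abs_log_div_le {x y K : ℝ} (hx : 0 < x) (hy : 0 < y)
    (h : |log (y / x)| ≤ K) : x ≤ y * exp K := by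
  have h' : log (x / y) ≤ K := by
    rw [← inv_div, log_inv]
    exact (neg_le_abs _).trans h
  rw [log_le_iff_le_exp (div_pos hx hy), div_le_iff₀ hy] at h'
  linarith

def LogLipschitzNear (f : ℝ → ℝ) (a M η : ℝ) : Prop :=
  ∀ t, M * |t| ≤ η → 0 < f (a + t) ∧ |log (f (a + t) / f a)| ≤ M * |t|

namespace LogLipschitzNear

variable {d dd : ℝ → ℝ} {a M η : ℝ}

theorem mul_sq_le (hdd : LogLipschitzNear dd a M η) (hd : ∀ x, HasDerivAt d (dd x) x)
    (ha : 0 < dd a) (hM : 0 ≤ M) {t : ℝ} (ht : M * |t| ≤ η) :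
    dd a * t ^ 2 ≤ t * (d (a + t) - d a) * exp (M * |t|) := by
  obtain ⟨s, hst, hmvt⟩ := exists_abs_le_sub_eq_mul_of_hasDerivAt hd a t
  have hMs : M * |s| ≤ M * |t| := mul_le_mul_of_nonneg_left hst hM
  obtain ⟨hpos, hlog⟩ := hdd s (hMs.trans ht)
  have hcurv : dd a ≤ dd (a + s) * exp (M * |t|) :=
    le_mul_exp_of_abs_log_div_le ha hpos (hlog.trans hMs)
  calc dd a * t ^ 2 ≤ dd (a + s) * exp (M * |t|) * t ^ 2 :=
        mul_le_mul_of_nonneg_right hcurv (sq_nonneg t)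
    _ = t * (d (a + t) - d a) * exp (M * |t|) := by rw [hmvt]; ring

theorem mul_min_le (hdd : LogLipschitzNear dd a M η) (hd : ∀ x, HasDerivAt d (dd x) x)
    (hmono : Monotone d) (ha : 0 < dd a) (hM : 0 ≤ M) {ρ : ℝ} (hρ : 0 < ρ) (hρη : M * ρ ≤ η)
    (t : ℝ) : dd a * min (|t| * ρ) (t ^ 2) ≤ t * (d (a + t) - d a) * exp (M * ρ) := by
  have hgap : 0 ≤ t * (d (a + t) - d a) := by
    simpa using hmono.sub_mul_sub_nonneg (a + t) a
  rcases le_or_gt |t| ρ with htρ | hρt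
  · have hMt : M * |t| ≤ M * ρ := mul_le_mul_of_nonneg_left htρ hM
    calc dd a * min (|t| * ρ) (t ^ 2) ≤ dd a * t ^ 2 :=
          mul_le_mul_of_nonneg_left (min_le_right _ _) ha.le
      _ ≤ t * (d (a + t) - d a) * exp (M * |t|) := hdd.mul_sq_le hd ha hM (hMt.trans hρη)
      _ ≤ t * (d (a + t) - d a) * exp (M * ρ) :=
          mul_le_mul_of_nonneg_left (exp_le_exp.2 hMt) hgap
  · have ht : 0 < |t| := hρ.trans hρt
    set c := ρ / |t|
    have hc0 : 0 < c := div_pos hρ ht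
    have hct : c * |t| = ρ := div_mul_cancel₀ ρ ht.ne'
    have hτ : |c * t| = ρ := by rw [abs_mul, abs_of_pos hc0, hct]
    have hlocal := hdd.mul_sq_le hd ha hM (t := c * t) (by rw [hτ]; exact hρη)
    rw [hτ] at hlocal
    have hfar : t * (d (a + c * t) - d a) ≤ t * (d (a + t) - d a) := by
      have h1c : 0 < 1 - c := sub_pos.2 ((div_lt_one ht).2 hρt)
      have h := hmono.sub_mul_sub_nonneg (a + t) (a + c * t)
      have : 0 ≤ t * (d (a + t) - d (a + c * t)) :=
        nonneg_of_mul_nonneg_right (by linear_combination h) h1c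
      linarith
    refine le_of_mul_le_mul_left ?_ hc0
    calc c * (dd a * min (|t| * ρ) (t ^ 2)) ≤ c * (dd a * (|t| * ρ)) := by
          gcongr
          exact min_le_left _ _
      _ = dd a * (c * t) ^ 2 := by rw [← sq_abs, hτ, ← hct]; ring
      _ ≤ c * t * (d (a + c * t) - d a) * exp (M * ρ) := hlocal
      _ = c * (t * (d (a + c * t) - d a) * exp (M * ρ)) := by ring
      _ ≤ c * (t * (d (a + t) - d a) * exp (M * ρ)) := by gcongr

end LogLipschitzNear

theorem Real.sInf_le_sInf_of_forall_exists_le {A B : Set ℝ} (hB : BddBelow B)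
    (hne : B.Nonempty → A.Nonempty) (h : ∀ a ∈ A, ∃ b ∈ B, b ≤ a) : sInf B ≤ sInf A := by
  rcases A.eq_empty_or_nonempty with rfl | hA
  · rw [Set.not_nonempty_iff_eq_empty.1 (mt hne Set.not_nonempty_empty)]
  · exact le_csInf hA fun a ha =>
      let ⟨b, hb, hba⟩ := h a ha
      (csInf_le hB hb).trans hba

section Scaling

variable {ι : Type*} {s : ℝ} {b : ι → ℝ}

def MemCone [DecidableEq ι] [Fintype ι] (S : Finset ι) (w : ι → ℝ) (ξ : ℝ) (b : ι → ℝ) : Prop :=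
  ∑ j ∈ Sᶜ, w j * |b j| ≤ ξ * ∑ j ∈ S, |b j| ∧ ∑ j ∈ S, |b j| ≠ 0

theorem abs_smul_apply_of_nonneg (hs : 0 ≤ s) (j : ι) : |(s • b) j| = s * |b j| := by
  rw [Pi.smul_apply, smul_eq_mul, abs_mul, abs_of_nonneg hs]

theorem MemCone.smul [DecidableEq ι] [Fintype ι] {S : Finset ι} {w : ι → ℝ} {ξ : ℝ} (h : MemCone S w ξ b) (hs : 0 < s) :
    MemCone S w ξ (s • b) := by
  simp only [MemCone, abs_smul_apply_of_nonneg hs.le, mul_left_comm (w _), ← mul_sum]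
  exact ⟨by rw [mul_left_comm]; exact mul_le_mul_of_nonneg_left h.1 hs.le,
    mul_ne_zero hs.ne' h.2⟩

theorem sqrt_sum_sq_smul [Fintype ι] (hs : 0 ≤ s) : √(∑ j, (s • b) j ^ 2) = s * √(∑ j, b j ^ 2) := by
  simp only [Pi.smul_apply, smul_eq_mul, mul_pow, ← mul_sum]
  rw [sqrt_mul (sq_nonneg s), sqrt_sq hs]

theorem sum_abs_mul_seminorm_smul (S : Finset ι) (φ : Seminorm ℝ (ι → ℝ)) (hs : 0 ≤ s) :
    (∑ j ∈ S, |(s • b) j|) * φ (s • b) = s ^ 2 * ((∑ j ∈ S, |b j|) * φ b) := by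
  rw [map_smul_eq_mul, norm_of_nonneg hs]
  simp only [abs_smul_apply_of_nonneg hs, ← mul_sum]
  ring

theorem sum_mul_smul [Fintype ι] {κ : Type*} (X : κ → ι → ℝ) (i : κ) :
    ∑ k, X i k * (s • b) k = s * ∑ k, X i k * b k := by
  simp only [Pi.smul_apply, smul_eq_mul, mul_left_comm (X i _), ← mul_sum]

theorem min_abs_mul_sq_mul (hs : 0 < s) (K L t : ℝ) :
    min (|s * t| * K / L) ((s * t) ^ 2) = s ^ 2 * min (|t| * (K / (L * s))) (t ^ 2) := by
  rw [mul_min_of_nonneg _ _ (sq_nonneg s), abs_mul, abs_of_pos hs]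
  congr 1
  · field_simp
  · ring

end Scaling

section GLM

variable {ι κ : Type*} [Fintype ι] [Fintype κ] (X : κ → ι → ℝ)

theorem sum_mul_sub_eq_sum_mul (c : ℝ) (b : ι → ℝ) (f g : κ → ℝ) :
    ∑ j, b j * (c * ∑ i, X i j * f i - c * ∑ i, X i j * g i) =
      c * ∑ i, (∑ k, X i k * b k) * (f i - g i) := by
  simp only [← mul_sub, ← sum_sub_distrib, mul_sum, sum_mul]
  rw [sum_comm]
  exact sum_congr rfl fun i _ => sum_congr rfl fun j _ => by ring

variable {d dd : ℝ → ℝ} {M η c : ℝ}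

theorem sum_mul_min_le_bregman (hd : ∀ x, HasDerivAt d (dd x) x) (hmono : Monotone d)
    (β : ι → ℝ) (hpos : ∀ i, 0 < dd (∑ k, X i k * β k))
    (hC : ∀ i, LogLipschitzNear dd (∑ k, X i k * β k) M η) (hc : 0 ≤ c)
    (hM : 0 ≤ M) {ρ : ℝ} (hρ : 0 < ρ) (hρη : M * ρ ≤ η) (b : ι → ℝ) :
    c * ∑ i, dd (∑ k, X i k * β k) * min (|∑ k, X i k * b k| * ρ) ((∑ k, X i k * b k) ^ 2) ≤
      (∑ j, b j * (c * ∑ i, X i j * d (∑ k, X i k * (β k + b k)) -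
        c * ∑ i, X i j * d (∑ k, X i k * β k))) * exp (M * ρ) := by
  rw [sum_mul_sub_eq_sum_mul, mul_assoc, sum_mul]
  refine mul_le_mul_of_nonneg_left (sum_le_sum fun i _ => ?_) hc
  simp only [mul_add, sum_add_distrib]
  exact (hC i).mul_min_le hd hmono (hpos i) hM hρ hρη _

theorem curvature_ratio_smul_inv_le [DecidableEq ι] (hd : ∀ x, HasDerivAt d (dd x) x)
    (hmono : Monotone d) (β : ι → ℝ) (hpos : ∀ i, 0 < dd (∑ k, X i k * β k))
    (hC : ∀ i, LogLipschitzNear dd (∑ k, X i k * β k) M η) (hc : 0 ≤ c)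
    (hM : 0 < M) {M₂ : ℝ} (hM₂ : 0 < M₂)
    (S : Finset ι) (φ : Seminorm ℝ (ι → ℝ)) {b : ι → ℝ} (hden : 0 < (∑ j ∈ S, |b j|) * φ b)
    {r : ℝ} (hr : 0 < r) (hrη : M₂ * r ≤ η) :
    c * (∑ i, dd (∑ k, X i k * β k) * min (|∑ k, X i k * (r⁻¹ • b) k| * M₂ / M)
        ((∑ k, X i k * (r⁻¹ • b) k) ^ 2)) / ((∑ j ∈ S, |(r⁻¹ • b) j|) * φ (r⁻¹ • b)) ≤
      (∑ j, b j * (c * ∑ i, X i j * d (∑ k, X i k * (β k + b k)) -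
        c * ∑ i, X i j * d (∑ k, X i k * β k))) * exp (M₂ * r) /
        ((∑ j ∈ S, |b j|) * φ b) := by
  have hs : 0 < r⁻¹ := inv_pos.2 hr
  have hρ : M * (M₂ / (M * r⁻¹)) = M₂ * r := by field_simp
  simp only [sum_mul_smul, min_abs_mul_sq_mul hs, sum_abs_mul_seminorm_smul S φ hs.le,
    mul_left_comm _ (r⁻¹ ^ 2), ← mul_sum]
  rw [mul_div_mul_left _ _ (pow_ne_zero 2 hs.ne'), ← hρ]
  exact div_le_div_of_nonneg_right
    (sum_mul_min_le_bregman X hd hmono β hpos hC hc hM.le (by positivity) (hρ ▸ hrη) b) hden.le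

end GLM

theorem sqrt_sum_sq_pos {ι : Type*} [Fintype ι] {b : ι → ℝ} (hb : b ≠ 0) :
    0 < √(∑ j, b j ^ 2) := by
  obtain ⟨j, hj⟩ := Function.ne_iff.1 hb
  exact sqrt_pos.2 <| (pow_pos (abs_pos.2 hj) 2).trans_le <| by
    simpa using single_le_sum (fun j _ => sq_nonneg (b j)) (mem_univ j)

theorem stmt_4_general (n p : ℕ)
    (X : Fin n → Fin p → ℝ)
    (ψ₀ dψ₀ ddψ₀ : ℝ → ℝ)
    (hψ₀conv : ConvexOn ℝ Set.univ ψ₀)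
    (hd1 : ∀ t, HasDerivAt ψ₀ (dψ₀ t) t)
    (hd2 : ∀ t, HasDerivAt dψ₀ (ddψ₀ t) t)
    (βs : Fin p → ℝ)
    (M₁ ηstar : ℝ) (hM₁ : 0 < M₁) (hηstar0 : 0 < ηstar)
    -- condition (C)
    (hC0 : ∀ i, 0 < ddψ₀ (∑ k, X i k * βs k))
    (hC : ∀ i, ∀ t : ℝ, M₁ * |t| ≤ ηstar →
        0 < ddψ₀ (∑ k, X i k * βs k + t) ∧
        |Real.log (ddψ₀ (∑ k, X i k * βs k + t) / ddψ₀ (∑ k, X i k * βs k))| ≤ M₁ * |t|)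
    (S : Finset (Fin p))
    (w : Fin p → ℝ)
    (ξ : ℝ) (M₂ : ℝ) (hM₂ : 0 < M₂)
    (φ : Seminorm ℝ (Fin p → ℝ)) :
    -- F(ξ,S;φ₀,φ) ≥ F*(ξ,S;φ)
    sInf { r : ℝ | ∃ b : Fin p → ℝ,
        (∑ j ∈ Sᶜ, w j * |b j| ≤ ξ * ∑ j ∈ S, |b j|) ∧ (∑ j ∈ S, |b j| ≠ 0) ∧
        M₂ * Real.sqrt (∑ j, b j ^ 2) ≤ ηstar ∧ (∑ j ∈ S, |b j|) * φ b ≠ 0 ∧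
        r = (∑ j, b j * ((n : ℝ)⁻¹ * ∑ i, X i j * dψ₀ (∑ k, X i k * (βs k + b k)) -
                (n : ℝ)⁻¹ * ∑ i, X i j * dψ₀ (∑ k, X i k * βs k))) *
              Real.exp (M₂ * Real.sqrt (∑ j, b j ^ 2)) /
            ((∑ j ∈ S, |b j|) * φ b) } ≥
    sInf { r : ℝ | ∃ b : Fin p → ℝ,
        (∑ j ∈ Sᶜ, w j * |b j| ≤ ξ * ∑ j ∈ S, |b j|) ∧ (∑ j ∈ S, |b j| ≠ 0) ∧
        Real.sqrt (∑ j, b j ^ 2) = 1 ∧ (∑ j ∈ S, |b j|) * φ b ≠ 0 ∧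
        r = (n : ℝ)⁻¹ * (∑ i, ddψ₀ (∑ k, X i k * βs k) *
              min (|∑ k, X i k * b k| * M₂ / M₁) ((∑ k, X i k * b k) ^ 2)) /
            ((∑ j ∈ S, |b j|) * φ b) } := by
  have hmono : Monotone dψ₀ := hψ₀conv.monotone_of_hasDerivAt hd1
  have hden_nonneg (b : Fin p → ℝ) : 0 ≤ (∑ j ∈ S, |b j|) * φ b :=
    mul_nonneg (sum_nonneg fun j _ => abs_nonneg _) (apply_nonneg φ b)
  apply Real.sInf_le_sInf_of_forall_exists_le
  · refine ⟨0, ?_⟩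
    rintro _ ⟨b, -, -, -, -, rfl⟩
    refine div_nonneg (mul_nonneg (by positivity) (sum_nonneg fun i _ => ?_)) (hden_nonneg b)
    exact mul_nonneg (hC0 i).le (le_min (by positivity) (sq_nonneg _))
  · -- `sInf ∅ = 0`, so the left set must be nonempty once the right one is: rescale a unit
    -- direction to length `ηstar / M₂`.
    rintro ⟨_, b, hcone, hSb, hnorm, hden, rfl⟩
    have hε : 0 < ηstar / M₂ := div_pos hηstar0 hM₂
    obtain ⟨hcone', hSb'⟩ := MemCone.smul (show MemCone S w ξ b from ⟨hcone, hSb⟩) hε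
    refine ⟨_, (ηstar / M₂) • b, hcone', hSb', ?_, ?_, rfl⟩
    · rw [sqrt_sum_sq_smul hε.le, hnorm, mul_one, mul_div_cancel₀ _ hM₂.ne']
    · rw [sum_abs_mul_seminorm_smul S φ hε.le]
      exact mul_ne_zero (by positivity) hden
  · rintro _ ⟨b, hcone, hSb, hnorm, hden, rfl⟩
    have hr : 0 < √(∑ j, b j ^ 2) := sqrt_sum_sq_pos <| by rintro rfl; simp at hden
    have hs : 0 < (√(∑ j, b j ^ 2))⁻¹ := inv_pos.2 hr
    obtain ⟨hcone', hSb'⟩ := MemCone.smul (show MemCone S w ξ b from ⟨hcone, hSb⟩) hs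
    refine ⟨_, ⟨_ • b, hcone', hSb', ?_, ?_, rfl⟩, curvature_ratio_smul_inv_le X hd2 hmono βs hC0
      hC (by positivity) hM₁ hM₂ S φ ((hden_nonneg b).lt_of_ne' hden) hr hnorm⟩
    · rw [sqrt_sum_sq_smul hs.le, inv_mul_cancel₀ hr.ne']
    · rw [sum_abs_mul_seminorm_smul S φ hs.le]
      exact mul_ne_zero (by positivity) hden

theorem stmt_4 (n p : ℕ) (hn : 1 ≤ n) (hp : 1 ≤ p)
    (X : Fin n → Fin p → ℝ)
    (ψ₀ dψ₀ ddψ₀ : ℝ → ℝ)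
    (hψ₀conv : ConvexOn ℝ Set.univ ψ₀)
    (hd1 : ∀ t, HasDerivAt ψ₀ (dψ₀ t) t)
    (hd2 : ∀ t, HasDerivAt dψ₀ (ddψ₀ t) t)
    (βs : Fin p → ℝ)
    (M₁ ηstar : ℝ) (hM₁ : 0 < M₁) (hηstar0 : 0 < ηstar) (hηstar1 : ηstar ≤ 1)
    -- condition (C)
    (hC0 : ∀ i, 0 < ddψ₀ (∑ k, X i k * βs k))
    (hC : ∀ i, ∀ t : ℝ, M₁ * |t| ≤ ηstar →
        0 < ddψ₀ (∑ k, X i k * βs k + t) ∧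
        |Real.log (ddψ₀ (∑ k, X i k * βs k + t) / ddψ₀ (∑ k, X i k * βs k))| ≤ M₁ * |t|)
    (S : Finset (Fin p)) (hS : ∀ j, βs j ≠ 0 → j ∈ S)
    (w : Fin p → ℝ) (hw : ∀ j, 0 ≤ w j) (hwpos : ∀ j ∉ S, 0 < w j)
    (ξ : ℝ) (hξ : 0 < ξ) (M₂ : ℝ) (hM₂ : 0 < M₂)
    (φ : Seminorm ℝ (Fin p → ℝ)) :
    -- F(ξ,S;φ₀,φ) ≥ F*(ξ,S;φ)
    sInf { r : ℝ | ∃ b : Fin p → ℝ,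
        (∑ j ∈ Sᶜ, w j * |b j| ≤ ξ * ∑ j ∈ S, |b j|) ∧ (∑ j ∈ S, |b j| ≠ 0) ∧
        M₂ * Real.sqrt (∑ j, b j ^ 2) ≤ ηstar ∧ (∑ j ∈ S, |b j|) * φ b ≠ 0 ∧
        r = (∑ j, b j * ((n : ℝ)⁻¹ * ∑ i, X i j * dψ₀ (∑ k, X i k * (βs k + b k)) -
                (n : ℝ)⁻¹ * ∑ i, X i j * dψ₀ (∑ k, X i k * βs k))) *
              Real.exp (M₂ * Real.sqrt (∑ j, b j ^ 2)) /
            ((∑ j ∈ S, |b j|) * φ b) } ≥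
    sInf { r : ℝ | ∃ b : Fin p → ℝ,
        (∑ j ∈ Sᶜ, w j * |b j| ≤ ξ * ∑ j ∈ S, |b j|) ∧ (∑ j ∈ S, |b j| ≠ 0) ∧
        Real.sqrt (∑ j, b j ^ 2) = 1 ∧ (∑ j ∈ S, |b j|) * φ b ≠ 0 ∧
        r = (n : ℝ)⁻¹ * (∑ i, ddψ₀ (∑ k, X i k * βs k) *
              min (|∑ k, X i k * b k| * M₂ / M₁) ((∑ k, X i k * b k) ^ 2)) /
            ((∑ j ∈ S, |b j|) * φ b) } :=
  stmt_4_general n p X ψ₀ dψ₀ ddψ₀ hψ₀conv hd1 hd2 βs M₁ ηstar hM₁ hηstar0 hC0 hC S w ξ M₂ hM₂ φ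
end

section
/- Assume the GLM loss and condition (C) with constant M₁ ≥ 0 and η* = ∞ (i.e., the logarithmic bound on ψ̈₀ holds for all t ∈ ℝ). Then for every b ∈ ℝ^p: (i) e^{−M₁|Xb|_∞} ⟨b, Σ* b⟩ ≤ Δ(β* + b, β*) ≤ e^{M₁|Xb|_∞} ⟨b, Σ* b⟩, where |Xb|_∞ = max_i |x^i b|; and (ii) if ⟨b, Σ* b⟩ > 0 then, setting φ₀(b) = M₁ Σ_{i=1}^n ψ̈₀(x^iβ*)|x^i b|³ / Σ_{i=1}^n ψ̈₀(x^iβ*)(x^i b)², one has φ₀(b) ≤ M₁|Xb|_∞ and Δ(β* + b, β*) e^{φ₀(b)} ≥ ⟨b, Σ* b⟩. -/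
/-!
Write `sᵢ = xⁱβ*` and `tᵢ = xⁱb`. Exchanging the order of summation,
`Δ(β* + b, β*) = n⁻¹ Σᵢ tᵢ (ψ̇₀(sᵢ + tᵢ) - ψ̇₀(sᵢ))`, and by the mean value theorem each summand is
`ψ̈₀(sᵢ + uᵢ) tᵢ²` with `|uᵢ| ≤ |tᵢ|`. Condition (C) pins `ψ̈₀(sᵢ + uᵢ)` between `ψ̈₀(sᵢ) e^{∓M₁|tᵢ|}`,
which gives (i) after bounding `|tᵢ|` by `|Xb|_∞`. For (ii), Jensen's inequality for `exp` with the
weights `ψ̈₀(sᵢ) tᵢ²` bounds the weighted mean of `e^{-M₁|tᵢ|}` from below by `e^{-φ₀(b)}`.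
-/

open Finset Real

lemma exists_abs_le_and_sub_eq_mul_of_hasDerivAt {f f' : ℝ → ℝ}
    (hf : ∀ x, HasDerivAt f (f' x) x) (s t : ℝ) :
    ∃ u, |u| ≤ |t| ∧ f (s + t) - f s = f' (s + u) * t := by
  have hcont : ∀ a b : ℝ, ContinuousOn f (Set.Icc a b) :=
    fun _ _ => HasDerivAt.continuousOn fun x _ => hf x
  rcases lt_trichotomy t 0 with ht | rfl | ht
  · obtain ⟨c, hc, hslope⟩ := exists_hasDerivAt_eq_slope f f' (by linarith : s + t < s)
      (hcont _ _) fun x _ => hf x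
    refine ⟨c - s, ?_, ?_⟩
    · rw [abs_of_neg ht, abs_le]
      constructor <;> linarith [hc.1, hc.2]
    · rw [add_sub_cancel, hslope, div_mul_eq_mul_div, eq_div_iff (by linarith)]
      ring
  · exact ⟨0, by simp, by simp⟩
  · obtain ⟨c, hc, hslope⟩ := exists_hasDerivAt_eq_slope f f' (by linarith : s < s + t)
      (hcont _ _) fun x _ => hf x
    refine ⟨c - s, ?_, ?_⟩
    · rw [abs_of_pos ht, abs_le]
      constructor <;> linarith [hc.1, hc.2]
    · rw [add_sub_cancel, hslope, div_mul_eq_mul_div, eq_div_iff (by linarith)]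
      ring

lemma mem_Icc_mul_exp_of_abs_log_div_le {a b c : ℝ} (ha : 0 < a) (hb : 0 < b)
    (h : |log (a / b)| ≤ c) : a ∈ Set.Icc (b * exp (-c)) (b * exp c) := by
  obtain ⟨hlo, hhi⟩ := abs_le.mp h
  have hab : a = b * exp (log (a / b)) := by
    rw [exp_log (div_pos ha hb)]
    field_simp
  rw [hab]
  exact ⟨by gcongr, by gcongr⟩

lemma mul_sub_mem_Icc_of_abs_log_div_le {f f' : ℝ → ℝ} {M s : ℝ}
    (hf : ∀ x, HasDerivAt f (f' x) x) (hM : 0 ≤ M) (hs : 0 < f' s)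
    (hC : ∀ u, 0 < f' (s + u) ∧ |log (f' (s + u) / f' s)| ≤ M * |u|) (t : ℝ) :
    t * (f (s + t) - f s) ∈
      Set.Icc (f' s * t ^ 2 * exp (-(M * |t|))) (f' s * t ^ 2 * exp (M * |t|)) := by
  obtain ⟨u, hu, hmvt⟩ := exists_abs_le_and_sub_eq_mul_of_hasDerivAt hf s t
  obtain ⟨hpos, hlog⟩ := hC u
  obtain ⟨hlo, hhi⟩ := mem_Icc_mul_exp_of_abs_log_div_le hpos hs
    (hlog.trans (mul_le_mul_of_nonneg_left hu hM))
  rw [hmvt]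
  constructor <;> nlinarith [sq_nonneg t]

lemma mul_exp_sum_mul_div_le_sum_mul_exp {ι : Type*} {s : Finset ι} {w a : ι → ℝ}
    (hw : ∀ i ∈ s, 0 ≤ w i) (hpos : 0 < ∑ i ∈ s, w i) :
    (∑ i ∈ s, w i) * exp ((∑ i ∈ s, w i * a i) / ∑ i ∈ s, w i) ≤ ∑ i ∈ s, w i * exp (a i) := by
  have h := convexOn_exp.map_centerMass_le hw hpos fun i _ => Set.mem_univ (a i)
  simp only [centerMass, smul_eq_mul, Function.comp_apply, inv_mul_eq_div] at h
  rwa [le_div_iff₀' hpos] at h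

lemma sum_mul_sub_sum_eq_sum_mul_sub {ι κ : Type*} [Fintype ι] [Fintype κ]
    (X : ι → κ → ℝ) (b : κ → ℝ) (g h : ι → ℝ) (c : ℝ) :
    ∑ j, b j * (c * ∑ i, X i j * g i - c * ∑ i, X i j * h i) =
      c * ∑ i, (∑ k, X i k * b k) * (g i - h i) := by
  simp only [← mul_sub, ← sum_sub_distrib, mul_sum, sum_mul]
  rw [sum_comm]
  refine sum_congr rfl fun i _ => sum_congr rfl fun j _ => ?_
  ring

section WeightedBounds

variable {ι : Type*} [Fintype ι] {c t D : ι → ℝ} {M : ℝ}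

lemma abs_le_iSup_abs (t : ι → ℝ) (i : ι) : |t i| ≤ ⨆ i, |t i| :=
  le_ciSup (Set.finite_range fun i => |t i|).bddAbove i

lemma exp_neg_mul_iSup_abs_mul_sum_le (hM : 0 ≤ M) (hc : ∀ i, 0 ≤ c i)
    (hD : ∀ i, c i * t i ^ 2 * exp (-(M * |t i|)) ≤ D i) :
    exp (-(M * ⨆ i, |t i|)) * ∑ i, c i * t i ^ 2 ≤ ∑ i, D i := by
  rw [mul_sum]
  gcongr with i
  refine le_trans ?_ (hD i)
  rw [mul_comm]
  have := hc i
  gcongr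
  exact abs_le_iSup_abs t i

lemma sum_le_exp_mul_iSup_abs_mul_sum (hM : 0 ≤ M) (hc : ∀ i, 0 ≤ c i)
    (hD : ∀ i, D i ≤ c i * t i ^ 2 * exp (M * |t i|)) :
    ∑ i, D i ≤ exp (M * ⨆ i, |t i|) * ∑ i, c i * t i ^ 2 := by
  rw [mul_sum]
  gcongr with i
  refine (hD i).trans ?_
  rw [mul_comm]
  have := hc i
  gcongr
  exact abs_le_iSup_abs t i

lemma mul_sum_mul_abs_pow_three_div_le (hM : 0 ≤ M) (hc : ∀ i, 0 ≤ c i)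
    (hQ : 0 < ∑ i, c i * t i ^ 2) :
    M * (∑ i, c i * |t i| ^ 3) / (∑ i, c i * t i ^ 2) ≤ M * ⨆ i, |t i| := by
  rw [div_le_iff₀ hQ, mul_assoc]
  gcongr
  rw [mul_sum]
  refine sum_le_sum fun i _ => ?_
  have := hc i
  calc c i * |t i| ^ 3 = |t i| * (c i * t i ^ 2) := by rw [pow_succ' |t i| 2, sq_abs]; ring
    _ ≤ (⨆ i, |t i|) * (c i * t i ^ 2) := by
      gcongr
      exact abs_le_iSup_abs t i

lemma sum_le_sum_mul_exp_mul_sum_mul_abs_pow_three_div (hc : ∀ i, 0 ≤ c i)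
    (hD : ∀ i, c i * t i ^ 2 * exp (-(M * |t i|)) ≤ D i) (hQ : 0 < ∑ i, c i * t i ^ 2) :
    ∑ i, c i * t i ^ 2 ≤
      (∑ i, D i) * exp (M * (∑ i, c i * |t i| ^ 3) / ∑ i, c i * t i ^ 2) := by
  have hmean : (∑ i, c i * t i ^ 2 * -(M * |t i|)) / ∑ i, c i * t i ^ 2 =
      -(M * (∑ i, c i * |t i| ^ 3) / ∑ i, c i * t i ^ 2) := by
    rw [← neg_div, mul_sum, ← sum_neg_distrib]
    congr 1
    refine sum_congr rfl fun i _ => ?_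
    rw [pow_succ' |t i| 2, sq_abs]
    ring
  have hjensen := mul_exp_sum_mul_div_le_sum_mul_exp (s := univ) (a := fun i => -(M * |t i|))
    (fun i _ => mul_nonneg (hc i) (sq_nonneg (t i))) hQ
  rw [hmean, exp_neg, ← div_eq_mul_inv, div_le_iff₀ (exp_pos _)] at hjensen
  exact hjensen.trans (by gcongr with i; exact hD i)

end WeightedBounds

theorem stmt_5_general (n p : ℕ)
    (X : Fin n → Fin p → ℝ)
    (dψ₀ ddψ₀ : ℝ → ℝ)
    (hd2 : ∀ t, HasDerivAt dψ₀ (ddψ₀ t) t)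
    (βs : Fin p → ℝ)
    (M₁ : ℝ) (hM₁ : 0 ≤ M₁)
    -- condition (C) with η* = ∞
    (hC0 : ∀ i, 0 < ddψ₀ (∑ k, X i k * βs k))
    (hC : ∀ i, ∀ t : ℝ,
        0 < ddψ₀ (∑ k, X i k * βs k + t) ∧
        |Real.log (ddψ₀ (∑ k, X i k * βs k + t) / ddψ₀ (∑ k, X i k * βs k))| ≤ M₁ * |t|) :
    ∀ b : Fin p → ℝ,
      -- (i) two-sided bound with M₁|Xb|_∞
      (Real.exp (-(M₁ * ⨆ i, |∑ k, X i k * b k|)) *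
          ((n : ℝ)⁻¹ * ∑ i, ddψ₀ (∑ k, X i k * βs k) * (∑ k, X i k * b k) ^ 2) ≤
        ∑ j, b j * ((n : ℝ)⁻¹ * ∑ i, X i j * dψ₀ (∑ k, X i k * (βs k + b k)) -
              (n : ℝ)⁻¹ * ∑ i, X i j * dψ₀ (∑ k, X i k * βs k)) ∧
       ∑ j, b j * ((n : ℝ)⁻¹ * ∑ i, X i j * dψ₀ (∑ k, X i k * (βs k + b k)) -
              (n : ℝ)⁻¹ * ∑ i, X i j * dψ₀ (∑ k, X i k * βs k)) ≤
        Real.exp (M₁ * ⨆ i, |∑ k, X i k * b k|) *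
          ((n : ℝ)⁻¹ * ∑ i, ddψ₀ (∑ k, X i k * βs k) * (∑ k, X i k * b k) ^ 2)) ∧
      -- (ii) the Jensen-type bound for φ₀
      (0 < (n : ℝ)⁻¹ * ∑ i, ddψ₀ (∑ k, X i k * βs k) * (∑ k, X i k * b k) ^ 2 →
        (M₁ * (∑ i, ddψ₀ (∑ k, X i k * βs k) * |∑ k, X i k * b k| ^ 3) /
            (∑ i, ddψ₀ (∑ k, X i k * βs k) * (∑ k, X i k * b k) ^ 2) ≤
          M₁ * ⨆ i, |∑ k, X i k * b k|) ∧
        (n : ℝ)⁻¹ * ∑ i, ddψ₀ (∑ k, X i k * βs k) * (∑ k, X i k * b k) ^ 2 ≤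
          (∑ j, b j * ((n : ℝ)⁻¹ * ∑ i, X i j * dψ₀ (∑ k, X i k * (βs k + b k)) -
                (n : ℝ)⁻¹ * ∑ i, X i j * dψ₀ (∑ k, X i k * βs k))) *
            Real.exp (M₁ * (∑ i, ddψ₀ (∑ k, X i k * βs k) * |∑ k, X i k * b k| ^ 3) /
              (∑ i, ddψ₀ (∑ k, X i k * βs k) * (∑ k, X i k * b k) ^ 2))) := by
  intro b
  have harg : ∀ i, ∑ k, X i k * (βs k + b k) = ∑ k, X i k * βs k + ∑ k, X i k * b k :=
    fun i => by simp only [mul_add, sum_add_distrib]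
  simp only [harg, sum_mul_sub_sum_eq_sum_mul_sub]
  have hbounds := fun i => mul_sub_mem_Icc_of_abs_log_div_le hd2 hM₁ (hC0 i) (hC i)
    (∑ k, X i k * b k)
  have hc : ∀ i, 0 ≤ ddψ₀ (∑ k, X i k * βs k) := fun i => (hC0 i).le
  have hn : (0 : ℝ) ≤ (n : ℝ)⁻¹ := by positivity
  refine ⟨⟨?_, ?_⟩, fun hQ => ⟨?_, ?_⟩⟩
  · rw [mul_left_comm]
    exact mul_le_mul_of_nonneg_left
      (exp_neg_mul_iSup_abs_mul_sum_le hM₁ hc fun i => (hbounds i).1) hn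
  · rw [mul_left_comm]
    exact mul_le_mul_of_nonneg_left
      (sum_le_exp_mul_iSup_abs_mul_sum hM₁ hc fun i => (hbounds i).2) hn
  · exact mul_sum_mul_abs_pow_three_div_le hM₁ hc (pos_of_mul_pos_right hQ hn)
  · rw [mul_assoc]
    exact mul_le_mul_of_nonneg_left (sum_le_sum_mul_exp_mul_sum_mul_abs_pow_three_div hc
      (fun i => (hbounds i).1) (pos_of_mul_pos_right hQ hn)) hn

theorem stmt_5 (n p : ℕ) (hn : 1 ≤ n) (hp : 1 ≤ p)
    (X : Fin n → Fin p → ℝ)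
    (ψ₀ dψ₀ ddψ₀ : ℝ → ℝ)
    (hψ₀conv : ConvexOn ℝ Set.univ ψ₀)
    (hd1 : ∀ t, HasDerivAt ψ₀ (dψ₀ t) t)
    (hd2 : ∀ t, HasDerivAt dψ₀ (ddψ₀ t) t)
    (βs : Fin p → ℝ)
    (M₁ : ℝ) (hM₁ : 0 ≤ M₁)
    -- condition (C) with η* = ∞
    (hC0 : ∀ i, 0 < ddψ₀ (∑ k, X i k * βs k))
    (hC : ∀ i, ∀ t : ℝ,
        0 < ddψ₀ (∑ k, X i k * βs k + t) ∧
        |Real.log (ddψ₀ (∑ k, X i k * βs k + t) / ddψ₀ (∑ k, X i k * βs k))| ≤ M₁ * |t|) :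
    ∀ b : Fin p → ℝ,
      -- (i) two-sided bound with M₁|Xb|_∞
      (Real.exp (-(M₁ * ⨆ i, |∑ k, X i k * b k|)) *
          ((n : ℝ)⁻¹ * ∑ i, ddψ₀ (∑ k, X i k * βs k) * (∑ k, X i k * b k) ^ 2) ≤
        ∑ j, b j * ((n : ℝ)⁻¹ * ∑ i, X i j * dψ₀ (∑ k, X i k * (βs k + b k)) -
              (n : ℝ)⁻¹ * ∑ i, X i j * dψ₀ (∑ k, X i k * βs k)) ∧
       ∑ j, b j * ((n : ℝ)⁻¹ * ∑ i, X i j * dψ₀ (∑ k, X i k * (βs k + b k)) -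
              (n : ℝ)⁻¹ * ∑ i, X i j * dψ₀ (∑ k, X i k * βs k)) ≤
        Real.exp (M₁ * ⨆ i, |∑ k, X i k * b k|) *
          ((n : ℝ)⁻¹ * ∑ i, ddψ₀ (∑ k, X i k * βs k) * (∑ k, X i k * b k) ^ 2)) ∧
      -- (ii) the Jensen-type bound for φ₀
      (0 < (n : ℝ)⁻¹ * ∑ i, ddψ₀ (∑ k, X i k * βs k) * (∑ k, X i k * b k) ^ 2 →
        (M₁ * (∑ i, ddψ₀ (∑ k, X i k * βs k) * |∑ k, X i k * b k| ^ 3) /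
            (∑ i, ddψ₀ (∑ k, X i k * βs k) * (∑ k, X i k * b k) ^ 2) ≤
          M₁ * ⨆ i, |∑ k, X i k * b k|) ∧
        (n : ℝ)⁻¹ * ∑ i, ddψ₀ (∑ k, X i k * βs k) * (∑ k, X i k * b k) ^ 2 ≤
          (∑ j, b j * ((n : ℝ)⁻¹ * ∑ i, X i j * dψ₀ (∑ k, X i k * (βs k + b k)) -
                (n : ℝ)⁻¹ * ∑ i, X i j * dψ₀ (∑ k, X i k * βs k))) *
            Real.exp (M₁ * (∑ i, ddψ₀ (∑ k, X i k * βs k) * |∑ k, X i k * b k| ^ 3) /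
              (∑ i, ddψ₀ (∑ k, X i k * βs k) * (∑ k, X i k * b k) ^ 2))) :=
  stmt_5_general n p X dψ₀ ddψ₀ hd2 βs M₁ hM₁ hC0 hC
end

section
/- Assume the GLM loss and the GLM probability model. Then for every b ∈ ℝ^p, E exp( (n/σ²) ⟨b, z − ψ̇(β*)⟩ ) = exp( σ^{-2} Σ_{i=1}^n [ ψ₀(x^i(β* + b)) − ψ₀(x^iβ*) − (x^i b) ψ̇₀(x^iβ*) ] ). Consequently, if condition (C) holds with constants M₁ ≥ 0, 0 < η* ≤ ∞, and if M₁ |Xb|_∞ ≤ η₀ for some 0 < η₀ ≤ η*, then E exp( (n/σ²) ⟨b, z − ψ̇(β*)⟩ ) ≤ exp( n e^{η₀} ⟨b, Σ* b⟩ / (2σ²) ). -/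
/-!
Independence factorises the expectation into one-dimensional moment generating functions of the
centred responses. Tilting the exponential-family density at `θ` by `exp (s v / σ²)` gives the
density at `θ + s` times `exp ((ψ₀ (θ + s) - ψ₀ θ) / σ²)`, and the normalisation at `θ + s`
turns each factor into `exp ((ψ₀ (θ + s) - ψ₀ θ - s ψ̇₀ θ) / σ²)`. For the bound, condition (C)
gives `ψ̈₀ ≤ e^{η₀} ψ̈₀ (x^i β*)` on the segment from `x^i β*` to `x^i (β* + b)`, so each
second-order Taylor remainder is at most `e^{η₀} ψ̈₀ (x^i β*) (x^i b)² / 2`.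
-/

open MeasureTheory ProbabilityTheory

open scoped ENNReal

open Set in
theorem sub_sub_mul_le_of_deriv2_le {g g' g'' : ℝ → ℝ}
    (hg : ∀ t, HasDerivAt g (g' t) t) (hg' : ∀ t, HasDerivAt g' (g'' t) t) {θ s K : ℝ}
    (hK : ∀ u, |u| ≤ |s| → g'' (θ + u) ≤ K) :
    g (θ + s) - g θ - s * g' θ ≤ K * s ^ 2 / 2 := by
  rcases eq_or_ne s 0 with rfl | hs
  · simp
  -- `h'' = K - g'' ≥ 0` near `θ` and `h' θ = 0`, so `h` is minimal at `θ`.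
  set h : ℝ → ℝ := fun t => K * (t - θ) ^ 2 / 2 - g t + t * g' θ
  have hh : ∀ t, HasDerivAt h (K * (t - θ) - g' t + g' θ) t := fun t => by
    have := ((((hasDerivAt_id t).sub_const θ).pow 2).const_mul K).div_const 2
    refine ((this.sub (hg t)).add ((hasDerivAt_id t).mul_const (g' θ))).congr_deriv ?_
    simp only [id, Nat.cast_ofNat]
    ring
  have hh' : ∀ t, HasDerivAt (fun t => K * (t - θ) - g' t + g' θ) (K - g'' t) t := fun t => by
    simpa using ((((hasDerivAt_id t).sub_const θ).const_mul K).sub (hg' t)).add_const (g' θ)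
  have hconv : ConvexOn ℝ (Icc (θ - |s|) (θ + |s|)) h := by
    refine convexOn_of_hasDerivWithinAt2_nonneg (convex_Icc _ _)
      (fun t _ => (hh t).continuousAt.continuousWithinAt) (fun t _ => (hh t).hasDerivWithinAt)
      (fun t _ => (hh' t).hasDerivWithinAt) fun t ht => ?_
    rw [interior_Icc] at ht
    have := hK (t - θ) (abs_sub_le_iff.2 ⟨by linarith [ht.2], by linarith [ht.1]⟩)
    rw [add_sub_cancel] at this
    linarith
  have hmin : IsMinOn h (Icc (θ - |s|) (θ + |s|)) θ := by
    refine hconv.isMinOn_of_rightDeriv_eq_zero ?_ ?_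
    · rw [interior_Icc]
      constructor <;> linarith [abs_pos.2 hs]
    · rw [((hh θ).hasDerivWithinAt).derivWithin (uniqueDiffWithinAt_Ioi θ)]
      simp
  have := hmin (a := θ + s) ⟨by linarith [neg_abs_le s], by linarith [le_abs_self s]⟩
  simp only [mem_ofPred_eq, h, sub_self, add_sub_cancel_left] at this
  linarith

noncomputable def expFamilyDensity (ψ₀ c : ℝ → ℝ) (σ θ v : ℝ) : ℝ :=
  Real.exp ((θ * v - ψ₀ θ) / σ ^ 2 + c v / σ ^ 2)

theorem expFamilyDensity_pos (ψ₀ c : ℝ → ℝ) (σ θ v : ℝ) : 0 < expFamilyDensity ψ₀ c σ θ v :=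
  Real.exp_pos _

noncomputable def expFamilyMeasure (ν : Measure ℝ) (ψ₀ c : ℝ → ℝ) (σ θ : ℝ) : Measure ℝ :=
  ν.withDensity fun v => ENNReal.ofReal (expFamilyDensity ψ₀ c σ θ v)

theorem exp_mul_expFamilyDensity (ψ₀ c : ℝ → ℝ) {σ : ℝ} (hσ : σ ≠ 0) (θ s v : ℝ) :
    Real.exp (s / σ ^ 2 * v) * expFamilyDensity ψ₀ c σ θ v =
      Real.exp ((ψ₀ (θ + s) - ψ₀ θ) / σ ^ 2) * expFamilyDensity ψ₀ c σ (θ + s) v := by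
  simp only [expFamilyDensity, ← Real.exp_add]
  congr 1
  field_simp
  ring

theorem mgf_id_expFamilyMeasure {ν : Measure ℝ} {ψ₀ c : ℝ → ℝ} (hc : Measurable c) {σ : ℝ}
    (hσ : σ ≠ 0) (hnorm : ∀ θ, ∫ v, expFamilyDensity ψ₀ c σ θ v ∂ν = 1) (θ s : ℝ) :
    mgf id (expFamilyMeasure ν ψ₀ c σ θ) (s / σ ^ 2) =
      Real.exp ((ψ₀ (θ + s) - ψ₀ θ) / σ ^ 2) := by
  have hmeas : Measurable fun v => (expFamilyDensity ψ₀ c σ θ v).toNNReal := by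
    unfold expFamilyDensity; fun_prop
  have hdens (v : ℝ) : (expFamilyDensity ψ₀ c σ θ v).toNNReal • Real.exp (s / σ ^ 2 * v) =
      Real.exp ((ψ₀ (θ + s) - ψ₀ θ) / σ ^ 2) * expFamilyDensity ψ₀ c σ (θ + s) v := by
    rw [NNReal.smul_def, Real.coe_toNNReal _ (expFamilyDensity_pos ψ₀ c σ θ v).le, smul_eq_mul,
      mul_comm, exp_mul_expFamilyDensity ψ₀ c hσ]
  rw [mgf, expFamilyMeasure]
  change ∫ v, _ ∂(ν.withDensity fun v => ((expFamilyDensity ψ₀ c σ θ v).toNNReal : ℝ≥0∞)) = _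
  simp only [integral_withDensity_eq_integral_smul hmeas, id, hdens, integral_const_mul, hnorm,
    mul_one]

theorem mgf_sub_const_of_map_eq_expFamilyMeasure {Ω : Type*} {mΩ : MeasurableSpace Ω}
    {P : Measure Ω} {Y : Ω → ℝ} (hY : Measurable Y) {ν : Measure ℝ} {ψ₀ c : ℝ → ℝ}
    (hc : Measurable c) {σ : ℝ} (hσ : σ ≠ 0)
    (hnorm : ∀ θ, ∫ v, expFamilyDensity ψ₀ c σ θ v ∂ν = 1) {θ : ℝ}
    (hlaw : P.map Y = expFamilyMeasure ν ψ₀ c σ θ) (s d : ℝ) :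
    mgf (fun ω => Y ω - d) P (s / σ ^ 2) = Real.exp ((ψ₀ (θ + s) - ψ₀ θ - s * d) / σ ^ 2) := by
  simp only [sub_eq_add_neg (Y _), mgf_add_const, ← mgf_id_map hY.aemeasurable, hlaw,
    mgf_id_expFamilyMeasure hc hσ hnorm, ← Real.exp_add]
  congr 1
  field_simp
  ring

theorem natCast_mul_inv_mul_sum {n : ℕ} (f : Fin n → ℝ) :
    (n : ℝ) * ((n : ℝ)⁻¹ * ∑ i, f i) = ∑ i, f i := by
  rcases Nat.eq_zero_or_pos n with rfl | hn
  · simp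
  · rw [← mul_assoc, mul_inv_cancel₀ (by positivity), one_mul]

theorem sum_mul_sum_sub_sum_comm {n p : ℕ} (X : Fin n → Fin p → ℝ) (b : Fin p → ℝ)
    (u w : Fin n → ℝ) :
    ∑ j, b j * (∑ i, X i j * u i - ∑ i, X i j * w i) = ∑ i, (∑ k, X i k * b k) * (u i - w i) := by
  simp only [← Finset.sum_sub_distrib, Finset.mul_sum, Finset.sum_mul, ← mul_sub]
  rw [Finset.sum_comm]
  exact Finset.sum_congr rfl fun i _ => Finset.sum_congr rfl fun j _ => by ring

theorem natCast_div_mul_sum_mean_sub_mean {n p : ℕ} (X : Fin n → Fin p → ℝ) (b : Fin p → ℝ)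
    (u w : Fin n → ℝ) (a : ℝ) :
    (n : ℝ) / a * ∑ j, b j * ((n : ℝ)⁻¹ * ∑ i, X i j * u i - (n : ℝ)⁻¹ * ∑ i, X i j * w i) =
      ∑ i, (∑ k, X i k * b k) / a * (u i - w i) := by
  simp only [← mul_sub, mul_left_comm (b _), ← Finset.mul_sum, sum_mul_sum_sub_sum_comm]
  rw [div_mul_eq_mul_div, natCast_mul_inv_mul_sum, Finset.sum_div]
  exact Finset.sum_congr rfl fun i _ => by ring

theorem le_exp_mul_of_abs_log_div_le {a b η : ℝ} (ha : 0 < a) (hb : 0 < b)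
    (h : |Real.log (b / a)| ≤ η) : b ≤ Real.exp η * a := by
  rw [← div_le_iff₀ ha, ← Real.log_le_iff_le_exp (div_pos hb ha)]
  exact (le_abs_self _).trans h

theorem ProbabilityTheory.iIndepFun.integral_exp_sum_mul_sub {Ω ι : Type*} [Fintype ι]
    {mΩ : MeasurableSpace Ω} {P : Measure Ω} {Y : ι → Ω → ℝ} (hindep : iIndepFun Y P)
    (hY : ∀ i, Measurable (Y i)) (c d : ι → ℝ) :
    ∫ ω, Real.exp (∑ i, c i * (Y i ω - d i)) ∂P = ∏ i, mgf (fun ω => Y i ω - d i) P (c i) := by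
  have hcomp := hindep.comp (fun i x => c i * (x - d i)) fun i => by fun_prop
  have := hcomp.mgf_sum (t := 1) (fun i => by fun_prop) Finset.univ
  simp only [mgf, Finset.sum_apply, Function.comp_apply, one_mul] at this
  simpa only [mgf, mul_comm (c _)] using this

theorem stmt_6_general (n p : ℕ)
    (X : Fin n → Fin p → ℝ)
    (ψ₀ dψ₀ ddψ₀ : ℝ → ℝ)
    (hd1 : ∀ t, HasDerivAt ψ₀ (dψ₀ t) t)
    (hd2 : ∀ t, HasDerivAt dψ₀ (ddψ₀ t) t)
    (βs : Fin p → ℝ)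
    (σ : ℝ) (hσ : 0 < σ)
    (cc : ℝ → ℝ) (hcc : Measurable cc)
    (ν : Measure ℝ)
    -- the GLM density integrates to one for every natural parameter θ
    (hnorm : ∀ θ : ℝ,
        ∫ v, Real.exp ((θ * v - ψ₀ θ) / σ ^ 2 + cc v / σ ^ 2) ∂ν = 1)
    (Ω : Type) (mΩ : MeasurableSpace Ω) (P : Measure Ω)
    (y : Ω → Fin n → ℝ) (hmeas : ∀ i, Measurable fun ω => y ω i)
    (hindep : iIndepFun (fun i ω => y ω i) P)
    (hlaw : ∀ i, Measure.map (fun ω => y ω i) P =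
        ν.withDensity (fun v => ENNReal.ofReal (Real.exp
          (((∑ k, X i k * βs k) * v - ψ₀ (∑ k, X i k * βs k)) / σ ^ 2 + cc v / σ ^ 2)))) :
    -- (i) the exact moment generating identity, with z = X'y/n
    (∀ b : Fin p → ℝ,
      ∫ ω, Real.exp (((n : ℝ) / σ ^ 2) *
          ∑ j, b j * ((n : ℝ)⁻¹ * ∑ i, X i j * y ω i -
            (n : ℝ)⁻¹ * ∑ i, X i j * dψ₀ (∑ k, X i k * βs k))) ∂P =
      Real.exp ((1 / σ ^ 2) * ∑ i,
        (ψ₀ (∑ k, X i k * (βs k + b k)) - ψ₀ (∑ k, X i k * βs k) -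
          (∑ k, X i k * b k) * dψ₀ (∑ k, X i k * βs k)))) ∧
    -- (ii) consequently, under condition (C) with M₁ ≥ 0 and 0 < η* ≤ ∞
    (∀ (M₁ : ℝ) (ηstar : EReal), 0 ≤ M₁ → 0 < ηstar →
      (∀ i, 0 < ddψ₀ (∑ k, X i k * βs k)) →
      (∀ i, ∀ t : ℝ, ((M₁ * |t| : ℝ) : EReal) ≤ ηstar →
        0 < ddψ₀ (∑ k, X i k * βs k + t) ∧
        |Real.log (ddψ₀ (∑ k, X i k * βs k + t) / ddψ₀ (∑ k, X i k * βs k))| ≤ M₁ * |t|) →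
      ∀ (b : Fin p → ℝ) (η₀ : ℝ), 0 < η₀ → ((η₀ : ℝ) : EReal) ≤ ηstar →
        M₁ * (⨆ i, |∑ k, X i k * b k|) ≤ η₀ →
        ∫ ω, Real.exp (((n : ℝ) / σ ^ 2) *
            ∑ j, b j * ((n : ℝ)⁻¹ * ∑ i, X i j * y ω i -
              (n : ℝ)⁻¹ * ∑ i, X i j * dψ₀ (∑ k, X i k * βs k))) ∂P ≤
        Real.exp ((n : ℝ) * Real.exp η₀ *
            ((n : ℝ)⁻¹ * ∑ i, ddψ₀ (∑ k, X i k * βs k) * (∑ k, X i k * b k) ^ 2) /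
          (2 * σ ^ 2))) := by
  have hsplit (b : Fin p → ℝ) (i : Fin n) :
      ∑ k, X i k * (βs k + b k) = ∑ k, X i k * βs k + ∑ k, X i k * b k := by
    simp only [mul_add, Finset.sum_add_distrib]
  have hmgf (b : Fin p → ℝ) : ∫ ω, Real.exp (((n : ℝ) / σ ^ 2) *
          ∑ j, b j * ((n : ℝ)⁻¹ * ∑ i, X i j * y ω i -
            (n : ℝ)⁻¹ * ∑ i, X i j * dψ₀ (∑ k, X i k * βs k))) ∂P =
      Real.exp ((1 / σ ^ 2) * ∑ i,
        (ψ₀ (∑ k, X i k * (βs k + b k)) - ψ₀ (∑ k, X i k * βs k) -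
          (∑ k, X i k * b k) * dψ₀ (∑ k, X i k * βs k))) := by
    simp only [natCast_div_mul_sum_mean_sub_mean]
    rw [hindep.integral_exp_sum_mul_sub hmeas]
    simp only [mgf_sub_const_of_map_eq_expFamilyMeasure (hmeas _) hcc hσ.ne' hnorm (hlaw _),
      ← Real.exp_sum, hsplit, Finset.mul_sum, one_div_mul_eq_div]
  refine ⟨hmgf, fun M₁ ηstar hM₁ _ hpos hC b η₀ _ hη₀ hXb => ?_⟩
  rw [hmgf b, Real.exp_le_exp, mul_right_comm, natCast_mul_inv_mul_sum, Finset.sum_mul,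
    Finset.sum_div, Finset.mul_sum]
  gcongr with i
  have hcurv (u : ℝ) (hu : |u| ≤ |∑ k, X i k * b k|) :
      ddψ₀ (∑ k, X i k * βs k + u) ≤ Real.exp η₀ * ddψ₀ (∑ k, X i k * βs k) := by
    have hsup : |∑ k, X i k * b k| ≤ ⨆ j, |∑ k, X j k * b k| :=
      le_ciSup (f := fun j => |∑ k, X j k * b k|) (Set.finite_range _).bddAbove i
    have hu' : M₁ * |u| ≤ η₀ := (mul_le_mul_of_nonneg_left (hu.trans hsup) hM₁).trans hXb
    obtain ⟨hpos', hlog⟩ := hC i u ((EReal.coe_le_coe_iff.2 hu').trans hη₀)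
    exact le_exp_mul_of_abs_log_div_le (hpos i) hpos' (hlog.trans hu')
  have htaylor := sub_sub_mul_le_of_deriv2_le hd1 hd2 hcurv
  rw [hsplit]
  calc _ ≤ 1 / σ ^ 2 *
        (Real.exp η₀ * ddψ₀ (∑ k, X i k * βs k) * (∑ k, X i k * b k) ^ 2 / 2) := by gcongr
    _ = _ := by ring

theorem stmt_6 (n p : ℕ) (hn : 1 ≤ n) (hp : 1 ≤ p)
    (X : Fin n → Fin p → ℝ)
    (ψ₀ dψ₀ ddψ₀ : ℝ → ℝ)
    (hψ₀conv : ConvexOn ℝ Set.univ ψ₀)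
    (hd1 : ∀ t, HasDerivAt ψ₀ (dψ₀ t) t)
    (hd2 : ∀ t, HasDerivAt dψ₀ (ddψ₀ t) t)
    (βs : Fin p → ℝ)
    (σ : ℝ) (hσ : 0 < σ)
    (cc : ℝ → ℝ) (hcc : Measurable cc)
    (ν : Measure ℝ) [SigmaFinite ν]
    -- the GLM density integrates to one for every natural parameter θ
    (hnorm : ∀ θ : ℝ,
        ∫ v, Real.exp ((θ * v - ψ₀ θ) / σ ^ 2 + cc v / σ ^ 2) ∂ν = 1)
    (Ω : Type) (mΩ : MeasurableSpace Ω) (P : Measure Ω) [IsProbabilityMeasure P]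
    (y : Ω → Fin n → ℝ) (hmeas : ∀ i, Measurable fun ω => y ω i)
    (hindep : iIndepFun (fun i ω => y ω i) P)
    (hlaw : ∀ i, Measure.map (fun ω => y ω i) P =
        ν.withDensity (fun v => ENNReal.ofReal (Real.exp
          (((∑ k, X i k * βs k) * v - ψ₀ (∑ k, X i k * βs k)) / σ ^ 2 + cc v / σ ^ 2)))) :
    -- (i) the exact moment generating identity, with z = X'y/n
    (∀ b : Fin p → ℝ,
      ∫ ω, Real.exp (((n : ℝ) / σ ^ 2) *
          ∑ j, b j * ((n : ℝ)⁻¹ * ∑ i, X i j * y ω i -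
            (n : ℝ)⁻¹ * ∑ i, X i j * dψ₀ (∑ k, X i k * βs k))) ∂P =
      Real.exp ((1 / σ ^ 2) * ∑ i,
        (ψ₀ (∑ k, X i k * (βs k + b k)) - ψ₀ (∑ k, X i k * βs k) -
          (∑ k, X i k * b k) * dψ₀ (∑ k, X i k * βs k)))) ∧
    -- (ii) consequently, under condition (C) with M₁ ≥ 0 and 0 < η* ≤ ∞
    (∀ (M₁ : ℝ) (ηstar : EReal), 0 ≤ M₁ → 0 < ηstar →
      (∀ i, 0 < ddψ₀ (∑ k, X i k * βs k)) →
      (∀ i, ∀ t : ℝ, ((M₁ * |t| : ℝ) : EReal) ≤ ηstar →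
        0 < ddψ₀ (∑ k, X i k * βs k + t) ∧
        |Real.log (ddψ₀ (∑ k, X i k * βs k + t) / ddψ₀ (∑ k, X i k * βs k))| ≤ M₁ * |t|) →
      ∀ (b : Fin p → ℝ) (η₀ : ℝ), 0 < η₀ → ((η₀ : ℝ) : EReal) ≤ ηstar →
        M₁ * (⨆ i, |∑ k, X i k * b k|) ≤ η₀ →
        ∫ ω, Real.exp (((n : ℝ) / σ ^ 2) *
            ∑ j, b j * ((n : ℝ)⁻¹ * ∑ i, X i j * y ω i -
              (n : ℝ)⁻¹ * ∑ i, X i j * dψ₀ (∑ k, X i k * βs k))) ∂P ≤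
        Real.exp ((n : ℝ) * Real.exp η₀ *
            ((n : ℝ)⁻¹ * ∑ i, ddψ₀ (∑ k, X i k * βs k) * (∑ k, X i k * b k) ^ 2) /
          (2 * σ ^ 2))) :=
  stmt_6_general n p X ψ₀ dψ₀ ddψ₀ hd1 hd2 βs σ hσ cc hcc ν hnorm Ω mΩ P y hmeas hindep hlaw
end

section
/- Assume the GLM loss, the GLM probability model, and condition (C) with constants M₁ ≥ 0 and 0 < η* ≤ ∞. Let S ⊆ {1,…,p} with S ⊇ {j : β*_j ≠ 0}, let w ∈ ℝ^p be deterministic with w_j > 0 for j ∉ S, assume Σ*_{jj} > 0 for all j, let λ₀ > 0, λ₁ > 0, and set t_j = λ₀ for j ∈ S and t_j = w_j λ₁ for j ∉ S. Suppose there are constants 0 < η₀ ≤ η* and ε₀ > 0 such that M₁ max_{1≤j≤p} ( |x_j|_∞ t_j / Σ*_{jj} ) ≤ η₀ e^{η₀} and Σ_{j=1}^p exp( − n t_j² e^{−η₀} / (2σ² Σ*_{jj}) ) ≤ ε₀/2, where x_j is the j-th column of X and |x_j|_∞ = max_i |x_{ij}|. Then P( z*₀ ≤ λ₀ and z*₁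 ≤ λ₁ ) ≥ 1 − ε₀, where z*₀ = max_{j∈S} |(z − ψ̇(β*))_j| and z*₁ = max_{j∉S} |(z − ψ̇(β*))_j| / w_j. -/
/-!
For each coordinate `j`, `(z - ψ̇(β*))_j` is the weighted sum `n⁻¹ ∑ᵢ x_{ij} (yᵢ - ψ̇₀(θᵢ))` of
independent centred responses. Exponential tilting of the density gives
`E exp(s yᵢ) = exp((ψ₀(θᵢ + sσ²) - ψ₀(θᵢ)) / σ²)`, and condition (C) bounds `ψ̈₀` by
`e^{η₀} ψ̈₀(θᵢ)` near `θᵢ`, so a second-order Taylor bound makes each response sub-Gaussian with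
variance proxy `σ² e^{η₀} ψ̈₀(θᵢ)`, as long as the Chernoff parameter stays in the range where (C)
applies. The first penalty-level condition says exactly that the optimal Chernoff parameter does,
which yields the two-sided tail `2 exp(-n t_j² e^{-η₀} / (2σ² Σ*_{jj}))`; the second condition
closes a union bound over `j`.
-/

open MeasureTheory ProbabilityTheory Real Set

theorem le_mul_exp_of_abs_log_div_le_s7 {a b K : ℝ} (ha : 0 < a) (hb : 0 < b)
    (h : |log (b / a)| ≤ K) : b ≤ a * exp K := by
  rw [← div_le_iff₀' ha, ← log_le_iff_le_exp (div_pos hb ha)]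
  exact (le_abs_self _).trans h

theorem sub_sub_mul_le_of_deriv2_le_s7 {f f' f'' : ℝ → ℝ}
    (hf : ∀ t, HasDerivAt f (f' t) t) (hf' : ∀ t, HasDerivAt f' (f'' t) t)
    {θ h C : ℝ} (hC : ∀ u, |u| ≤ |h| → f'' (θ + u) ≤ C) :
    f (θ + h) - f θ - f' θ * h ≤ C * h ^ 2 / 2 := by
  rcases eq_or_ne h 0 with rfl | hh
  · simp
  let g : ℝ → ℝ := fun u => C * u ^ 2 / 2 - f (θ + u) + f' θ * u
  let g' : ℝ → ℝ := fun u => C * u - f' (θ + u) + f' θ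
  have hg : ∀ u, HasDerivAt g (g' u) u := fun u => by
    have := (((hasDerivAt_pow 2 u).const_mul C).div_const 2).sub
      ((hf (θ + u)).comp_const_add θ u) |>.add ((hasDerivAt_id u).const_mul (f' θ))
    exact this.congr_deriv (by ring)
  have hg' : ∀ u, HasDerivAt g' (C - f'' (θ + u)) u := fun u => by
    have := (((hasDerivAt_id u).const_mul C).sub
      ((hf' (θ + u)).comp_const_add θ u)).add_const (f' θ)
    exact this.congr_deriv (by simp)
  -- `g` is convex on `[-|h|, |h|]` and has a critical point at `0`, which is therefore a minimum
  have hconv : ConvexOn ℝ (Icc (-|h|) |h|) g := by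
    refine convexOn_of_hasDerivWithinAt2_nonneg (convex_Icc _ _)
      (fun u _ => (hg u).continuousAt.continuousWithinAt)
      (fun u _ => (hg u).hasDerivWithinAt) (fun u _ => (hg' u).hasDerivWithinAt) ?_
    intro u hu
    rw [interior_Icc, mem_Ioo, ← abs_lt] at hu
    exact sub_nonneg.2 (hC u hu.le)
  have hmin : IsMinOn g (Icc (-|h|) |h|) 0 := by
    refine hconv.isMinOn_of_rightDeriv_eq_zero ?_ ?_
    · rw [interior_Icc]; exact ⟨by simpa using hh, by simpa using hh⟩
    · rw [(hg 0).hasDerivWithinAt.derivWithin (uniqueDiffWithinAt_Ioi 0)]; simp [g']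
  have : g 0 ≤ g h := hmin ⟨neg_abs_le h, le_abs_self h⟩
  norm_num [g] at this
  linarith

noncomputable section

def glmDensity (ψ₀ : ℝ → ℝ) (σ : ℝ) (c : ℝ → ℝ) (θ v : ℝ) : ℝ :=
  exp ((θ * v - ψ₀ θ) / σ ^ 2 + c v / σ ^ 2)

def glmLaw (ψ₀ : ℝ → ℝ) (σ : ℝ) (c : ℝ → ℝ) (ν : Measure ℝ) (θ : ℝ) : Measure ℝ :=
  ν.withDensity fun v => ENNReal.ofReal (glmDensity ψ₀ σ c θ v)

end

section ExponentialFamily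

variable {ψ₀ : ℝ → ℝ} {σ : ℝ} {c : ℝ → ℝ} {ν : Measure ℝ}

theorem exp_mul_mul_glmDensity (hσ : σ ≠ 0) (s θ v : ℝ) :
    exp (s * v) * glmDensity ψ₀ σ c θ v =
      exp ((ψ₀ (θ + s * σ ^ 2) - ψ₀ θ) / σ ^ 2) * glmDensity ψ₀ σ c (θ + s * σ ^ 2) v := by
  simp only [glmDensity, ← exp_add]
  congr 1
  field_simp
  ring

theorem glmDensity_nonneg (θ v : ℝ) : 0 ≤ glmDensity ψ₀ σ c θ v := exp_nonneg _

theorem measurable_glmDensity (hc : Measurable c) (θ : ℝ) :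
    Measurable (glmDensity ψ₀ σ c θ) := by
  unfold glmDensity; fun_prop

theorem integrable_exp_mul_glmLaw (hσ : σ ≠ 0) (hc : Measurable c)
    (hnorm : ∀ θ, ∫ v, glmDensity ψ₀ σ c θ v ∂ν = 1) (θ s : ℝ) :
    Integrable (fun v => exp (s * v)) (glmLaw ψ₀ σ c ν θ) := by
  rw [glmLaw, integrable_withDensity_iff (measurable_glmDensity hc θ).ennreal_ofReal
    (.of_forall fun _ => ENNReal.ofReal_lt_top)]
  simp only [ENNReal.toReal_ofReal (glmDensity_nonneg _ _), exp_mul_mul_glmDensity hσ]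
  exact (Integrable.of_integral_ne_zero (by simp [hnorm])).const_mul _

theorem mgf_id_glmLaw (hσ : σ ≠ 0) (hc : Measurable c)
    (hnorm : ∀ θ, ∫ v, glmDensity ψ₀ σ c θ v ∂ν = 1) (θ s : ℝ) :
    mgf id (glmLaw ψ₀ σ c ν θ) s = exp ((ψ₀ (θ + s * σ ^ 2) - ψ₀ θ) / σ ^ 2) := by
  rw [mgf, glmLaw, integral_withDensity_eq_integral_toReal_smul
    (measurable_glmDensity hc θ).ennreal_ofReal (.of_forall fun _ => ENNReal.ofReal_lt_top)]
  simp only [ENNReal.toReal_ofReal (glmDensity_nonneg _ _), smul_eq_mul, id, mul_comm _ (exp _),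
    exp_mul_mul_glmDensity hσ, integral_const_mul, hnorm, mul_one]

end ExponentialFamily

section Tails

variable {Ω : Type*} {mΩ : MeasurableSpace Ω} {P : Measure Ω}

theorem ofReal_one_sub_le_of_compl_subset_iUnion [IsProbabilityMeasure P] {ι : Type*} [Fintype ι]
    {s : Set Ω} {A : ι → Set Ω}
    (hs : sᶜ ⊆ ⋃ i, A i) {δ : ι → ℝ} (hA : ∀ i, P.real (A i) ≤ δ i) {ε : ℝ}
    (hδ : ∑ i, δ i ≤ ε) : ENNReal.ofReal (1 - ε) ≤ P s := by
  have hcompl : P.real sᶜ ≤ ε :=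
    calc P.real sᶜ ≤ P.real (⋃ i, A i) := measureReal_mono hs
      _ ≤ ∑ i, P.real (A i) := measureReal_iUnion_fintype_le A
      _ ≤ ε := (Finset.sum_le_sum fun i _ => hA i).trans hδ
  have hsplit : 1 ≤ P.real s + P.real sᶜ := by
    simpa [union_compl_self] using measureReal_union_le (μ := P) s sᶜ
  rw [← ofReal_measureReal]
  exact ENNReal.ofReal_le_ofReal (by linarith)

theorem measureReal_sum_ge_le_exp_of_mgf_le [IsProbabilityMeasure P] {ι : Type*} [Fintype ι]
    {Z : ι → Ω → ℝ} (hmeas : ∀ i, Measurable (Z i)) (hindep : iIndepFun Z P) {l : ℝ}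
    (hl : 0 ≤ l) (hint : ∀ i, Integrable (fun ω => exp (l * Z i ω)) P) {c : ι → ℝ}
    (hmgf : ∀ i, mgf (Z i) P l ≤ exp (c i * l ^ 2 / 2)) (ε : ℝ) :
    P.real {ω | ε ≤ ∑ i, Z i ω} ≤ exp (-l * ε + (∑ i, c i) * l ^ 2 / 2) := by
  calc P.real {ω | ε ≤ ∑ i, Z i ω}
      ≤ exp (-l * ε) * mgf (∑ i, Z i) P l := by
        simpa only [Finset.sum_apply] using measure_ge_le_exp_mul_mgf ε hl
          (hindep.integrable_exp_mul_sum hmeas fun i _ => hint i)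
    _ ≤ exp (-l * ε) * ∏ i, exp (c i * l ^ 2 / 2) := by
        rw [hindep.mgf_sum hmeas]
        gcongr with i
        · exact fun i _ => mgf_nonneg
        · exact hmgf i
    _ = exp (-l * ε + (∑ i, c i) * l ^ 2 / 2) := by
        rw [← exp_sum, ← exp_add, Finset.sum_mul, Finset.sum_div]

variable {ψ₀ dψ₀ ddψ₀ : ℝ → ℝ} {σ : ℝ} {c : ℝ → ℝ} {ν : Measure ℝ} {Y : Ω → ℝ} {θ : ℝ}

theorem integrable_exp_mul_of_map_eq_glmLaw (hσ : σ ≠ 0) (hc : Measurable c)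
    (hnorm : ∀ θ, ∫ v, glmDensity ψ₀ σ c θ v ∂ν = 1) (hY : Measurable Y)
    (hlaw : P.map Y = glmLaw ψ₀ σ c ν θ) (s : ℝ) :
    Integrable (fun ω => exp (s * Y ω)) P := by
  have := integrable_exp_mul_glmLaw hσ hc hnorm θ s
  rw [← hlaw] at this
  exact (integrable_map_measure (by fun_prop) hY.aemeasurable).1 this

theorem mgf_sub_deriv_le_of_map_eq_glmLaw (hσ : σ ≠ 0) (hc : Measurable c)
    (hnorm : ∀ θ, ∫ v, glmDensity ψ₀ σ c θ v ∂ν = 1) (hY : Measurable Y)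
    (hlaw : P.map Y = glmLaw ψ₀ σ c ν θ)
    (hd1 : ∀ t, HasDerivAt ψ₀ (dψ₀ t) t) (hd2 : ∀ t, HasDerivAt dψ₀ (ddψ₀ t) t)
    {s C : ℝ} (hC : ∀ u, |u| ≤ |s| * σ ^ 2 → ddψ₀ (θ + u) ≤ C) :
    mgf (fun ω => Y ω - dψ₀ θ) P s ≤ exp (C * σ ^ 2 * s ^ 2 / 2) := by
  have hσ2 : 0 < σ ^ 2 := by positivity
  have htaylor := sub_sub_mul_le_of_deriv2_le_s7 hd1 hd2 (θ := θ) (h := s * σ ^ 2) (C := C)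
    (by rwa [abs_mul, abs_of_pos hσ2])
  simp only [sub_eq_add_neg, mgf_add_const, ← mgf_id_map hY.aemeasurable, hlaw,
    mgf_id_glmLaw hσ hc hnorm, ← exp_add]
  gcongr
  rw [div_add' _ _ _ hσ2.ne', div_le_iff₀ hσ2]
  nlinarith

section WeightedSum

variable {ι : Type*} [Fintype ι] {y : Ω → ι → ℝ} {θ : ι → ℝ}

theorem measureReal_sum_mul_sub_deriv_ge_le [IsProbabilityMeasure P] (hσ : σ ≠ 0)
    (hc : Measurable c) (hnorm : ∀ θ, ∫ v, glmDensity ψ₀ σ c θ v ∂ν = 1)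
    (hmeas : ∀ i, Measurable fun ω => y ω i) (hindep : iIndepFun (fun i ω => y ω i) P)
    (hlaw : ∀ i, P.map (fun ω => y ω i) = glmLaw ψ₀ σ c ν (θ i))
    (hd1 : ∀ t, HasDerivAt ψ₀ (dψ₀ t) t) (hd2 : ∀ t, HasDerivAt dψ₀ (ddψ₀ t) t)
    {D : ι → ℝ} {r : ℝ} (hD : ∀ i u, |u| ≤ r → ddψ₀ (θ i + u) ≤ D i)
    (a : ι → ℝ) {ε : ℝ} (hε : 0 ≤ ε) (hV : 0 < ∑ i, D i * a i ^ 2)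
    (hr : ∀ i, ε * |a i| / ∑ i, D i * a i ^ 2 ≤ r) :
    P.real {ω | ε ≤ ∑ i, a i * (y ω i - dψ₀ (θ i))} ≤
      exp (-ε ^ 2 / (2 * σ ^ 2 * ∑ i, D i * a i ^ 2)) := by
  set V := ∑ i, D i * a i ^ 2
  have hσ2 : 0 < σ ^ 2 := by positivity
  -- the optimal Chernoff parameter for a Gaussian with variance `σ² V`
  set l := ε / (σ ^ 2 * V) with hl_def
  have hl : 0 ≤ l := by positivity
  have hint : ∀ i, Integrable (fun ω => exp (l * (a i * (y ω i - dψ₀ (θ i))))) P := fun i =>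
    ((integrable_exp_mul_of_map_eq_glmLaw hσ hc hnorm (hmeas i) (hlaw i) (l * a i)).mul_const
      (exp (-(l * a i * dψ₀ (θ i))))).congr (.of_forall fun ω => by
        dsimp only; rw [← exp_add]; ring_nf)
  have hmgf : ∀ i, mgf (fun ω => a i * (y ω i - dψ₀ (θ i))) P l ≤
      exp (D i * a i ^ 2 * σ ^ 2 * l ^ 2 / 2) := fun i => by
    rw [mgf_const_mul]
    refine (mgf_sub_deriv_le_of_map_eq_glmLaw hσ hc hnorm (hmeas i) (hlaw i) hd1 hd2
      fun u hu => hD i u (hu.trans ?_)).trans_eq (by ring_nf)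
    calc |a i * l| * σ ^ 2 = ε * |a i| / V := by
          rw [abs_mul, abs_of_nonneg hl, hl_def]; field_simp
      _ ≤ r := hr i
  refine (measureReal_sum_ge_le_exp_of_mgf_le (fun i => by fun_prop) (hindep.comp _
    fun i => (measurable_const_mul (a i)).comp (measurable_sub_const _)) hl hint hmgf ε).trans_eq ?_
  congr 1
  rw [← Finset.sum_mul]
  change -l * ε + V * σ ^ 2 * l ^ 2 / 2 = _
  rw [hl_def]
  field_simp
  ring

theorem measureReal_abs_sum_mul_sub_deriv_ge_le [IsProbabilityMeasure P] (hσ : σ ≠ 0)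
    (hc : Measurable c) (hnorm : ∀ θ, ∫ v, glmDensity ψ₀ σ c θ v ∂ν = 1)
    (hmeas : ∀ i, Measurable fun ω => y ω i) (hindep : iIndepFun (fun i ω => y ω i) P)
    (hlaw : ∀ i, P.map (fun ω => y ω i) = glmLaw ψ₀ σ c ν (θ i))
    (hd1 : ∀ t, HasDerivAt ψ₀ (dψ₀ t) t) (hd2 : ∀ t, HasDerivAt dψ₀ (ddψ₀ t) t)
    {D : ι → ℝ} {r : ℝ} (hD : ∀ i u, |u| ≤ r → ddψ₀ (θ i + u) ≤ D i)
    (a : ι → ℝ) {ε : ℝ} (hε : 0 ≤ ε) (hV : 0 < ∑ i, D i * a i ^ 2)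
    (hr : ∀ i, ε * |a i| / ∑ i, D i * a i ^ 2 ≤ r) :
    P.real {ω | ε ≤ |∑ i, a i * (y ω i - dψ₀ (θ i))|} ≤
      2 * exp (-ε ^ 2 / (2 * σ ^ 2 * ∑ i, D i * a i ^ 2)) := by
  have hneg : ∀ ω, -∑ i, a i * (y ω i - dψ₀ (θ i)) = ∑ i, -a i * (y ω i - dψ₀ (θ i)) :=
    fun ω => by simp [Finset.sum_neg_distrib]
  have hupper := measureReal_sum_mul_sub_deriv_ge_le hσ hc hnorm hmeas hindep hlaw hd1 hd2 hD
    a hε hV hr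
  have hlower := measureReal_sum_mul_sub_deriv_ge_le hσ hc hnorm hmeas hindep hlaw hd1 hd2 hD
    (fun i => -a i) hε (by simpa only [neg_sq] using hV)
    (by simpa only [neg_sq, abs_neg] using hr)
  simp only [neg_sq] at hlower
  calc P.real {ω | ε ≤ |∑ i, a i * (y ω i - dψ₀ (θ i))|}
      ≤ P.real ({ω | ε ≤ ∑ i, a i * (y ω i - dψ₀ (θ i))} ∪
          {ω | ε ≤ ∑ i, -a i * (y ω i - dψ₀ (θ i))}) := by
        refine measureReal_mono fun ω hω => ?_
        simp only [mem_ofPred_eq, mem_union, ← hneg] at hω ⊢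
        exact le_abs.1 hω
    _ ≤ _ := (measureReal_union_le _ _).trans (by linarith)

end WeightedSum

theorem measureReal_abs_mean_sub_ge_le [IsProbabilityMeasure P] {n : ℕ} {y : Ω → Fin n → ℝ}
    {θ : Fin n → ℝ} (hσ : σ ≠ 0)
    (hc : Measurable c) (hnorm : ∀ θ, ∫ v, glmDensity ψ₀ σ c θ v ∂ν = 1)
    (hmeas : ∀ i, Measurable fun ω => y ω i) (hindep : iIndepFun (fun i ω => y ω i) P)
    (hlaw : ∀ i, P.map (fun ω => y ω i) = glmLaw ψ₀ σ c ν (θ i))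
    (hd1 : ∀ t, HasDerivAt ψ₀ (dψ₀ t) t) (hd2 : ∀ t, HasDerivAt dψ₀ (ddψ₀ t) t)
    {M₁ η₀ : ℝ} (hM₁ : 0 ≤ M₁)
    (hD : ∀ i u, M₁ * |u| ≤ η₀ → ddψ₀ (θ i + u) ≤ ddψ₀ (θ i) * exp η₀)
    (x : Fin n → ℝ) {t : ℝ} (ht : 0 ≤ t) (hSig : 0 < (n : ℝ)⁻¹ * ∑ i, ddψ₀ (θ i) * x i ^ 2)
    (hcond : M₁ * ((⨆ i, |x i|) * t / ((n : ℝ)⁻¹ * ∑ i, ddψ₀ (θ i) * x i ^ 2)) ≤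
      η₀ * exp η₀) :
    P.real {ω | t ≤ |(n : ℝ)⁻¹ * ∑ i, x i * y ω i - (n : ℝ)⁻¹ * ∑ i, x i * dψ₀ (θ i)|} ≤
      2 * exp (-((n : ℝ) * t ^ 2 * exp (-η₀)) /
        (2 * σ ^ 2 * ((n : ℝ)⁻¹ * ∑ i, ddψ₀ (θ i) * x i ^ 2))) := by
  set Sig := (n : ℝ)⁻¹ * ∑ i, ddψ₀ (θ i) * x i ^ 2
  have hn : (0 : ℝ) < (n : ℝ)⁻¹ := lt_of_le_of_ne (by positivity) fun h => by
    simp [Sig, ← h] at hSig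
  have hn0 : (n : ℝ) ≠ 0 := (inv_pos.1 hn).ne'
  have hvar : ∑ i, ddψ₀ (θ i) * exp η₀ * ((n : ℝ)⁻¹ * x i) ^ 2 = exp η₀ * (n : ℝ)⁻¹ * Sig := by
    simp only [Sig, Finset.mul_sum]
    exact Finset.sum_congr rfl fun i _ => by ring
  set r := (⨆ i, |x i|) * t / Sig * exp (-η₀)
  have hr : M₁ * r ≤ η₀ := by
    calc M₁ * r = M₁ * ((⨆ i, |x i|) * t / Sig) * exp (-η₀) := by ring
      _ ≤ η₀ * exp η₀ * exp (-η₀) := by gcongr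
      _ = η₀ := by rw [mul_assoc, ← exp_add, add_neg_cancel, exp_zero, mul_one]
  have hevent : {ω | t ≤ |(n : ℝ)⁻¹ * ∑ i, x i * y ω i - (n : ℝ)⁻¹ * ∑ i, x i * dψ₀ (θ i)|} =
      {ω | t ≤ |∑ i, (n : ℝ)⁻¹ * x i * (y ω i - dψ₀ (θ i))|} := by
    simp only [Finset.mul_sum, ← Finset.sum_sub_distrib, mul_sub, mul_assoc]
  rw [hevent]
  refine (measureReal_abs_sum_mul_sub_deriv_ge_le hσ hc hnorm hmeas hindep hlaw hd1 hd2
    (D := fun i => ddψ₀ (θ i) * exp η₀) (r := r)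
    (fun i u hu => hD i u ((mul_le_mul_of_nonneg_left hu hM₁).trans hr)) _ ht
    (by rw [hvar]; positivity) fun i => ?_).trans_eq ?_
  · have hsup : |x i| ≤ ⨆ i, |x i| := le_ciSup (Set.finite_range fun i => |x i|).bddAbove i
    calc t * |(n : ℝ)⁻¹ * x i| / ∑ i, ddψ₀ (θ i) * exp η₀ * ((n : ℝ)⁻¹ * x i) ^ 2
        = |x i| * t / Sig * exp (-η₀) := by
          rw [hvar, abs_mul, abs_of_pos hn, exp_neg]; field_simp
      _ ≤ (⨆ i, |x i|) * t / Sig * exp (-η₀) := by gcongr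
  · rw [hvar, exp_neg]
    field_simp

end Tails

theorem stmt_7_general (n p : ℕ)
    (X : Fin n → Fin p → ℝ)
    (ψ₀ dψ₀ ddψ₀ : ℝ → ℝ)
    (hd1 : ∀ t, HasDerivAt ψ₀ (dψ₀ t) t)
    (hd2 : ∀ t, HasDerivAt dψ₀ (ddψ₀ t) t)
    (βs : Fin p → ℝ)
    (M₁ : ℝ) (ηstar : EReal) (hM₁ : 0 ≤ M₁)
    -- condition (C)
    (hC0 : ∀ i, 0 < ddψ₀ (∑ k, X i k * βs k))
    (hC : ∀ i, ∀ t : ℝ, ((M₁ * |t| : ℝ) : EReal) ≤ ηstar →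
        0 < ddψ₀ (∑ k, X i k * βs k + t) ∧
        |Real.log (ddψ₀ (∑ k, X i k * βs k + t) / ddψ₀ (∑ k, X i k * βs k))| ≤ M₁ * |t|)
    -- the GLM probability model
    (σ : ℝ) (hσ : 0 < σ)
    (cc : ℝ → ℝ) (hcc : Measurable cc)
    (ν : Measure ℝ)
    (hnorm : ∀ θ : ℝ,
        ∫ v, Real.exp ((θ * v - ψ₀ θ) / σ ^ 2 + cc v / σ ^ 2) ∂ν = 1)
    (Ω : Type) (mΩ : MeasurableSpace Ω) (P : Measure Ω) [IsProbabilityMeasure P]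
    (y : Ω → Fin n → ℝ) (hmeas : ∀ i, Measurable fun ω => y ω i)
    (hindep : iIndepFun (fun i ω => y ω i) P)
    (hlaw : ∀ i, Measure.map (fun ω => y ω i) P =
        ν.withDensity (fun v => ENNReal.ofReal (Real.exp
          (((∑ k, X i k * βs k) * v - ψ₀ (∑ k, X i k * βs k)) / σ ^ 2 + cc v / σ ^ 2))))
    -- the sparse set, deterministic weights, and penalty levels
    (S : Finset (Fin p))
    (w : Fin p → ℝ) (hwpos : ∀ j ∉ S, 0 < w j)
    (lam0 lam1 : ℝ) (hlam0 : 0 < lam0) (hlam1 : 0 < lam1)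
    -- the diagonal entries of Σ* are positive
    (hSigjj : ∀ j, 0 < (n : ℝ)⁻¹ * ∑ i, ddψ₀ (∑ k, X i k * βs k) * X i j ^ 2)
    -- (lm-2-cond-1)
    (η₀ ε₀ : ℝ) (hη₀star : ((η₀ : ℝ) : EReal) ≤ ηstar)
    (hcond1 : ∀ j, M₁ * ((⨆ i, |X i j|) * (if j ∈ S then lam0 else w j * lam1) /
        ((n : ℝ)⁻¹ * ∑ i, ddψ₀ (∑ k, X i k * βs k) * X i j ^ 2)) ≤ η₀ * Real.exp η₀)
    (hcond2 : ∑ j, Real.exp (-((n : ℝ) * (if j ∈ S then lam0 else w j * lam1) ^ 2 *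
          Real.exp (-η₀)) /
        (2 * σ ^ 2 * ((n : ℝ)⁻¹ * ∑ i, ddψ₀ (∑ k, X i k * βs k) * X i j ^ 2))) ≤ ε₀ / 2) :
    ENNReal.ofReal (1 - ε₀) ≤
      P {ω | (∀ j ∈ S,
          |(n : ℝ)⁻¹ * ∑ i, X i j * y ω i -
            (n : ℝ)⁻¹ * ∑ i, X i j * dψ₀ (∑ k, X i k * βs k)| ≤ lam0) ∧
        ∀ j ∉ S,
          |(n : ℝ)⁻¹ * ∑ i, X i j * y ω i -
            (n : ℝ)⁻¹ * ∑ i, X i j * dψ₀ (∑ k, X i k * βs k)| / w j ≤ lam1} := by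
  set θ : Fin n → ℝ := fun i => ∑ k, X i k * βs k
  set t : Fin p → ℝ := fun j => if j ∈ S then lam0 else w j * lam1
  have ht : ∀ j, 0 < t j := fun j => by
    by_cases hj : j ∈ S
    · simpa [t, hj] using hlam0
    · simpa [t, hj] using mul_pos (hwpos j hj) hlam1
  have hD : ∀ i u, M₁ * |u| ≤ η₀ → ddψ₀ (θ i + u) ≤ ddψ₀ (θ i) * exp η₀ := fun i u hu => by
    obtain ⟨hpos, hlog⟩ := hC i u ((EReal.coe_le_coe_iff.2 hu).trans hη₀star)
    exact le_mul_exp_of_abs_log_div_le_s7 (hC0 i) hpos (hlog.trans hu)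
  refine ofReal_one_sub_le_of_compl_subset_iUnion ?_ (fun j => measureReal_abs_mean_sub_ge_le
    hσ.ne' hcc hnorm hmeas hindep hlaw hd1 hd2 hM₁ hD (fun i => X i j) (ht j).le (hSigjj j)
    (hcond1 j)) (by rw [← Finset.mul_sum]; linarith)
  intro ω hω
  by_contra hsmall
  simp only [Set.mem_iUnion, Set.mem_ofPred_eq, not_exists, not_le] at hsmall
  refine hω ⟨fun j hj => by simpa [t, hj] using (hsmall j).le, fun j hj => ?_⟩
  rw [div_le_iff₀ (hwpos j hj)]
  simpa [t, hj, mul_comm] using (hsmall j).le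

theorem stmt_7 (n p : ℕ) (hn : 1 ≤ n) (hp : 1 ≤ p)
    (X : Fin n → Fin p → ℝ)
    (ψ₀ dψ₀ ddψ₀ : ℝ → ℝ)
    (hψ₀conv : ConvexOn ℝ Set.univ ψ₀)
    (hd1 : ∀ t, HasDerivAt ψ₀ (dψ₀ t) t)
    (hd2 : ∀ t, HasDerivAt dψ₀ (ddψ₀ t) t)
    (βs : Fin p → ℝ)
    (M₁ : ℝ) (ηstar : EReal) (hM₁ : 0 ≤ M₁) (hηstar : (0 : EReal) < ηstar)
    -- condition (C)
    (hC0 : ∀ i, 0 < ddψ₀ (∑ k, X i k * βs k))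
    (hC : ∀ i, ∀ t : ℝ, ((M₁ * |t| : ℝ) : EReal) ≤ ηstar →
        0 < ddψ₀ (∑ k, X i k * βs k + t) ∧
        |Real.log (ddψ₀ (∑ k, X i k * βs k + t) / ddψ₀ (∑ k, X i k * βs k))| ≤ M₁ * |t|)
    -- the GLM probability model
    (σ : ℝ) (hσ : 0 < σ)
    (cc : ℝ → ℝ) (hcc : Measurable cc)
    (ν : Measure ℝ) [SigmaFinite ν]
    (hnorm : ∀ θ : ℝ,
        ∫ v, Real.exp ((θ * v - ψ₀ θ) / σ ^ 2 + cc v / σ ^ 2) ∂ν = 1)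
    (Ω : Type) (mΩ : MeasurableSpace Ω) (P : Measure Ω) [IsProbabilityMeasure P]
    (y : Ω → Fin n → ℝ) (hmeas : ∀ i, Measurable fun ω => y ω i)
    (hindep : iIndepFun (fun i ω => y ω i) P)
    (hlaw : ∀ i, Measure.map (fun ω => y ω i) P =
        ν.withDensity (fun v => ENNReal.ofReal (Real.exp
          (((∑ k, X i k * βs k) * v - ψ₀ (∑ k, X i k * βs k)) / σ ^ 2 + cc v / σ ^ 2))))
    -- the sparse set, deterministic weights, and penalty levels
    (S : Finset (Fin p)) (hS : ∀ j, βs j ≠ 0 → j ∈ S)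
    (w : Fin p → ℝ) (hw : ∀ j, 0 ≤ w j) (hwpos : ∀ j ∉ S, 0 < w j)
    (lam0 lam1 : ℝ) (hlam0 : 0 < lam0) (hlam1 : 0 < lam1)
    -- the diagonal entries of Σ* are positive
    (hSigjj : ∀ j, 0 < (n : ℝ)⁻¹ * ∑ i, ddψ₀ (∑ k, X i k * βs k) * X i j ^ 2)
    -- (lm-2-cond-1)
    (η₀ ε₀ : ℝ) (hη₀ : 0 < η₀) (hη₀star : ((η₀ : ℝ) : EReal) ≤ ηstar) (hε₀ : 0 < ε₀)
    (hcond1 : ∀ j, M₁ * ((⨆ i, |X i j|) * (if j ∈ S then lam0 else w j * lam1) /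
        ((n : ℝ)⁻¹ * ∑ i, ddψ₀ (∑ k, X i k * βs k) * X i j ^ 2)) ≤ η₀ * Real.exp η₀)
    (hcond2 : ∑ j, Real.exp (-((n : ℝ) * (if j ∈ S then lam0 else w j * lam1) ^ 2 *
          Real.exp (-η₀)) /
        (2 * σ ^ 2 * ((n : ℝ)⁻¹ * ∑ i, ddψ₀ (∑ k, X i k * βs k) * X i j ^ 2))) ≤ ε₀ / 2) :
    ENNReal.ofReal (1 - ε₀) ≤
      P {ω | (∀ j ∈ S,
          |(n : ℝ)⁻¹ * ∑ i, X i j * y ω i -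
            (n : ℝ)⁻¹ * ∑ i, X i j * dψ₀ (∑ k, X i k * βs k)| ≤ lam0) ∧
        ∀ j ∉ S,
          |(n : ℝ)⁻¹ * ∑ i, X i j * y ω i -
            (n : ℝ)⁻¹ * ∑ i, X i j * dψ₀ (∑ k, X i k * βs k)| / w j ≤ lam1} :=
  stmt_7_general n p X ψ₀ dψ₀ ddψ₀ hd1 hd2 βs M₁ ηstar hM₁ hC0 hC σ hσ cc hcc ν hnorm Ω mΩ P y hmeas
    hindep hlaw S w hwpos lam0 lam1 hlam0 hlam1 hSigjj η₀ ε₀ hη₀star hcond1 hcond2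
end

section
/- Let X ∈ ℝ^{n×p} have rows x^1,…,x^n, let ψ(β) = n^{-1} Σ_{i=1}^n log(1 + exp(x^i β)) with gradient ψ̇(β) = n^{-1} Σ_i (x^i)' π_i(β), where π_i(β) = exp(x^iβ)/(1 + exp(x^iβ)). Then for all β, β* ∈ ℝ^p, ⟨β − β*, ψ̇(β) − ψ̇(β*)⟩ = n^{-1} Σ_{i=1}^n [ K(π_i(β*), π_i(β)) + K(π_i(β), π_i(β*)) ], i.e., the symmetrized Bregman divergence of the logistic loss equals the average symmetrized Kullback–Leibler divergence between the fitted Bernoulli probabilities. -/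
/-- Kullback–Leibler information between Bernoulli probabilities. -/
noncomputable def bernoulliKL (a b : ℝ) : ℝ :=
  a * Real.log (a / b) + (1 - a) * Real.log ((1 - a) / (1 - b))

/-- Logistic probability π_i(β) = exp(x^iβ)/(1+exp(x^iβ)). -/
noncomputable def logisticProb {n p : ℕ} (X : Fin n → Fin p → ℝ) (β : Fin p → ℝ)
    (i : Fin n) : ℝ :=
  Real.exp (∑ k, X i k * β k) / (1 + Real.exp (∑ k, X i k * β k))

/-!
The symmetrized Kullback–Leibler divergence of two Bernoulli laws is the product of the
differences of their means and of their log-odds. For the logistic model the log-odds of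
`π_i(β)` is the linear predictor `x^i β`, so summing over `i` and exchanging the two sums
turns the average divergence into `⟨β - β*, ψ̇(β) - ψ̇(β*)⟩`.
-/

open Real Finset

theorem bernoulliKL_add_bernoulliKL {a b : ℝ} (ha₀ : 0 < a) (ha₁ : a < 1) (hb₀ : 0 < b)
    (hb₁ : b < 1) :
    bernoulliKL a b + bernoulliKL b a = (a - b) * (log (a / (1 - a)) - log (b / (1 - b))) := by
  have ha₁' : 1 - a ≠ 0 := by linarith
  have hb₁' : 1 - b ≠ 0 := by linarith
  simp only [bernoulliKL, log_div ha₀.ne' hb₀.ne', log_div hb₀.ne' ha₀.ne',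
    log_div ha₁' hb₁', log_div hb₁' ha₁', log_div ha₀.ne' ha₁', log_div hb₀.ne' hb₁']
  ring

theorem Real.log_sigmoid_div_one_sub_sigmoid (x : ℝ) :
    log (sigmoid x / (1 - sigmoid x)) = x := by
  rw [← sigmoid_neg, ← sigmoid_mul_rexp_neg, div_mul_cancel_left₀ (sigmoid_pos x).ne', ← exp_neg,
    neg_neg, log_exp]

theorem logisticProb_eq_sigmoid {n p : ℕ} (X : Fin n → Fin p → ℝ) (β : Fin p → ℝ) (i : Fin n) :
    logisticProb X β i = sigmoid (∑ k, X i k * β k) := by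
  rw [logisticProb, sigmoid_def, exp_neg]
  field_simp
  ring

theorem symmKL_logisticProb {n p : ℕ} (X : Fin n → Fin p → ℝ) (β βs : Fin p → ℝ) (i : Fin n) :
    bernoulliKL (logisticProb X βs i) (logisticProb X β i) +
        bernoulliKL (logisticProb X β i) (logisticProb X βs i) =
      (∑ k, X i k * β k - ∑ k, X i k * βs k) * (logisticProb X β i - logisticProb X βs i) := by
  have h₀ : ∀ γ, 0 < logisticProb X γ i := fun γ ↦ logisticProb_eq_sigmoid X γ i ▸ sigmoid_pos _
  have h₁ : ∀ γ, logisticProb X γ i < 1 := fun γ ↦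
    logisticProb_eq_sigmoid X γ i ▸ sigmoid_lt_one _
  rw [add_comm, bernoulliKL_add_bernoulliKL (h₀ β) (h₁ β) (h₀ βs) (h₁ βs), mul_comm,
    logisticProb_eq_sigmoid, logisticProb_eq_sigmoid, log_sigmoid_div_one_sub_sigmoid,
    log_sigmoid_div_one_sub_sigmoid]

theorem stmt_19_general (n p : ℕ)
    (X : Fin n → Fin p → ℝ) (β βs : Fin p → ℝ) :
    ∑ j, (β j - βs j) *
        ((n : ℝ)⁻¹ * ∑ i, X i j * logisticProb X β i -
         (n : ℝ)⁻¹ * ∑ i, X i j * logisticProb X βs i) =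
    (n : ℝ)⁻¹ * ∑ i,
        (bernoulliKL (logisticProb X βs i) (logisticProb X β i) +
         bernoulliKL (logisticProb X β i) (logisticProb X βs i)) := by
  set prob := logisticProb X
  calc _ = (n : ℝ)⁻¹ * ∑ j, (β j - βs j) * ∑ i, X i j * (prob β i - prob βs i) := by
        simp only [← mul_sub, ← sum_sub_distrib, mul_sum, mul_left_comm (n : ℝ)⁻¹]
    _ = (n : ℝ)⁻¹ * ∑ i, (∑ k, X i k * β k - ∑ k, X i k * βs k) * (prob β i - prob βs i) := by
        congr 1
        simp only [← sum_sub_distrib, mul_sum, sum_mul]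
        rw [sum_comm]
        exact sum_congr rfl fun i _ ↦ sum_congr rfl fun k _ ↦ by ring
    _ = _ := by simp only [symmKL_logisticProb, prob]

theorem stmt_19 (n p : ℕ) (hn : 1 ≤ n) (hp : 1 ≤ p)
    (X : Fin n → Fin p → ℝ) (β βs : Fin p → ℝ) :
    ∑ j, (β j - βs j) *
        ((n : ℝ)⁻¹ * ∑ i, X i j * logisticProb X β i -
         (n : ℝ)⁻¹ * ∑ i, X i j * logisticProb X βs i) =
    (n : ℝ)⁻¹ * ∑ i,
        (bernoulliKL (logisticProb X βs i) (logisticProb X β i) +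
         bernoulliKL (logisticProb X β i) (logisticProb X βs i)) :=
  stmt_19_general n p X β βs
end
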